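/- arXiv:math/0305170 — 9 statements merged into one kernel-verified Lean document; each statement's English description precedes it below -/
import Mathlib

section
/- Let U be a nonempty bounded connected open subset of ℂ. Then there exists a holomorphic function ρ : U → ℂ with ρ(U) ⊆ Δ = {z ∈ ℂ : |z| < 1} such that ρ(U) is dense in Δ. -/
/-!
Let `b` be a point of `closure U` of maximal modulus. It lies on the frontier of `U`, and
`q z = conj b * (b - z)` maps `U` into the right half-plane with `0 ∈ closure (q '' U)`. Hence
`u = (1 + T q)⁻¹` takes values in the disk `|u - 1/2| ≤ 1/2`, is uniformly small on a given
compact subset of `U` once `T` is large, and is close to `1` somewhere in `U`.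

For `|a|, |w| ≤ 1` and such a `u`, the blend `a (1 - u)² + w u²` again has modulus at most `1`,
differs from `a` by at most `4 |u|`, and from `w` by at most `4 |1 - u|`. Blending step by step
with errors `2⁻ⁿ`, on compact sets that exhaust `U` and contain the points where earlier targets
were hit, towards targets having every point of the unit disk as a cluster point, gives a locally
uniformly convergent sequence whose holomorphic limit has dense image in the disk. The maximum
modulus principle keeps that image inside the open disk.
-/

open Complex ComplexConjugate Metric Set Filter Topology

namespace Complex

lemma one_add_ne_zero_of_re_nonneg {w : ℂ} (hw : 0 ≤ w.re) : 1 + w ≠ 0 := fun h => by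
  have := congrArg re h
  simp only [add_re, one_re, zero_re] at this
  linarith

lemma norm_inv_one_add_le {w : ℂ} (hw : 0 ≤ w.re) : ‖(1 + w)⁻¹‖ ≤ (1 + w.re)⁻¹ := by
  rw [norm_inv]
  gcongr
  simpa using re_le_norm (1 + w)

lemma sq_norm_inv_one_add_le_re {w : ℂ} (hw : 0 ≤ w.re) :
    ‖(1 + w)⁻¹‖ ^ 2 ≤ ((1 + w)⁻¹).re := by
  have hpos : 0 < normSq (1 + w) := normSq_pos.2 (one_add_ne_zero_of_re_nonneg hw)
  rw [inv_re, norm_inv, inv_pow, Complex.sq_norm, div_eq_mul_inv]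
  exact le_mul_of_one_le_left (inv_nonneg.2 hpos.le) (by simpa using hw)

lemma norm_inv_one_add_sub_one_le {w : ℂ} (hw : 0 ≤ w.re) : ‖(1 + w)⁻¹ - 1‖ ≤ ‖w‖ := by
  have hne := one_add_ne_zero_of_re_nonneg hw
  have : (1 + w)⁻¹ - 1 = -((1 + w)⁻¹ * w) := by field_simp; ring
  rw [this, norm_neg, norm_mul]
  exact mul_le_of_le_one_left (norm_nonneg w)
    ((norm_inv_one_add_le hw).trans (inv_le_one_of_one_le₀ (by linarith)))

lemma norm_le_one_of_sq_norm_le_re {u : ℂ} (hu : ‖u‖ ^ 2 ≤ u.re) : ‖u‖ ≤ 1 := by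
  nlinarith [re_le_norm u, norm_nonneg u]

lemma half_sq_norm_sub_le_re_conj_mul {b z : ℂ} (hz : ‖z‖ ≤ ‖b‖) :
    ‖b - z‖ ^ 2 / 2 ≤ (conj b * (b - z)).re := by
  have h := pow_le_pow_left₀ (norm_nonneg z) hz 2
  simp only [Complex.sq_norm, normSq_apply, mul_re, conj_re, conj_im, sub_re, sub_im] at h ⊢
  nlinarith [sq_nonneg (b.re + z.re), sq_nonneg (b.im + z.im)]

end Complex

section Blend

variable {a w u : ℂ}

lemma norm_blend_le_one (ha : ‖a‖ ≤ 1) (hw : ‖w‖ ≤ 1) (hu : ‖u‖ ^ 2 ≤ u.re) :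
    ‖a * (1 - u) ^ 2 + w * u ^ 2‖ ≤ 1 := by
  have h1u : ‖1 - u‖ ^ 2 = 1 - 2 * u.re + ‖u‖ ^ 2 := by
    simp only [Complex.sq_norm, normSq_apply, sub_re, sub_im, one_re, one_im]
    ring
  calc ‖a * (1 - u) ^ 2 + w * u ^ 2‖ ≤ ‖a‖ * ‖1 - u‖ ^ 2 + ‖w‖ * ‖u‖ ^ 2 := by
        refine (norm_add_le _ _).trans_eq ?_
        rw [norm_mul, norm_mul, norm_pow, norm_pow]
    _ ≤ 1 * ‖1 - u‖ ^ 2 + 1 * ‖u‖ ^ 2 := by gcongr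
    _ ≤ 1 := by linarith

lemma norm_blend_sub_left_le (ha : ‖a‖ ≤ 1) (hw : ‖w‖ ≤ 1) (hu : ‖u‖ ≤ 1) :
    ‖a * (1 - u) ^ 2 + w * u ^ 2 - a‖ ≤ 4 * ‖u‖ := by
  have : a * (1 - u) ^ 2 + w * u ^ 2 - a = u * ((a + w) * u - 2 * a) := by ring
  rw [this, norm_mul]
  have : ‖(a + w) * u - 2 * a‖ ≤ 4 := by
    calc ‖(a + w) * u - 2 * a‖ ≤ (‖a‖ + ‖w‖) * ‖u‖ + 2 * ‖a‖ := by
          refine (norm_sub_le _ _).trans ?_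
          rw [norm_mul, norm_mul, Complex.norm_two]
          gcongr
          exact norm_add_le a w
      _ ≤ (1 + 1) * 1 + 2 * 1 := by gcongr
      _ = 4 := by norm_num
  nlinarith [norm_nonneg u]

lemma norm_blend_sub_right_le (ha : ‖a‖ ≤ 1) (hw : ‖w‖ ≤ 1) (hu : ‖u‖ ≤ 1) :
    ‖a * (1 - u) ^ 2 + w * u ^ 2 - w‖ ≤ 4 * ‖1 - u‖ := by
  have : a * (1 - u) ^ 2 + w * u ^ 2 - w = (1 - u) * (a * (1 - u) - w * (1 + u)) := by ring
  rw [this, norm_mul, mul_comm]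
  gcongr
  calc ‖a * (1 - u) - w * (1 + u)‖ ≤ ‖a‖ * (1 + ‖u‖) + ‖w‖ * (1 + ‖u‖) := by
        refine (norm_sub_le _ _).trans ?_
        rw [norm_mul, norm_mul]
        gcongr
        · exact (norm_sub_le _ _).trans_eq (by rw [norm_one])
        · exact (norm_add_le _ _).trans_eq (by rw [norm_one])
    _ ≤ 1 * (1 + 1) + 1 * (1 + 1) := by gcongr
    _ = 4 := by norm_num

end Blend

-- `‖u z‖ ^ 2 ≤ (u z).re` says that `u z` lies in the closed disk `|u - 1/2| ≤ 1/2`.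
def HasPeakFunctions (U : Set ℂ) : Prop :=
  ∀ K ⊆ U, IsCompact K → ∀ ε > 0, ∃ u : ℂ → ℂ, DifferentiableOn ℂ u U ∧
    (∀ z ∈ U, ‖u z‖ ^ 2 ≤ (u z).re) ∧ (∀ z ∈ K, ‖u z‖ ≤ ε) ∧ ∃ z ∈ U, ‖u z - 1‖ ≤ ε

lemma hasPeakFunctions_of_re_pos {U : Set ℂ} {q : ℂ → ℂ} (hq : DifferentiableOn ℂ q U)
    (hre : ∀ z ∈ U, 0 < (q z).re) (h0 : (0 : ℂ) ∈ closure (q '' U)) : HasPeakFunctions U := by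
  intro K hKU hK ε hε
  obtain ⟨m, hm, hmK⟩ := hK.exists_forall_le'
    (continuous_re.comp_continuousOn (hq.continuousOn.mono hKU)) fun z hz => hre z (hKU hz)
  set T : ℝ := (ε * m)⁻¹
  have hT : 0 < T := by positivity
  have hTq : ∀ z ∈ U, 0 ≤ ((T : ℂ) * q z).re := fun z hz => by
    simpa [re_ofReal_mul] using mul_nonneg hT.le (hre z hz).le
  obtain ⟨_, ⟨y, hy, rfl⟩, hqy⟩ := Metric.mem_closure_iff.1 h0 (ε / T) (by positivity)
  refine ⟨fun z => (1 + T * q z)⁻¹, ?_, fun z hz => sq_norm_inv_one_add_le_re (hTq z hz),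
    fun z hz => ?_, y, hy, ?_⟩
  · exact ((hq.const_mul (T : ℂ)).const_add 1).inv fun z hz =>
      one_add_ne_zero_of_re_nonneg (hTq z hz)
  · calc ‖(1 + T * q z)⁻¹‖ ≤ (1 + ((T : ℂ) * q z).re)⁻¹ :=
          norm_inv_one_add_le (hTq z (hKU hz))
      _ ≤ (T * m)⁻¹ := by
        rw [re_ofReal_mul]
        gcongr
        have : T * m ≤ T * (q z).re := mul_le_mul_of_nonneg_left (hmK z hz) hT.le
        linarith
      _ = ε := by simp only [T]; field_simp
  · calc ‖(1 + T * q y)⁻¹ - 1‖ ≤ ‖(T : ℂ) * q y‖ := norm_inv_one_add_sub_one_le (hTq y hy)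
      _ ≤ T * (ε / T) := by
        rw [norm_mul, norm_real, Real.norm_of_nonneg hT.le]
        rw [dist_zero_left] at hqy
        gcongr
      _ = ε := by field_simp

lemma Bornology.IsBounded.hasPeakFunctions {U : Set ℂ} (hb : Bornology.IsBounded U)
    (hU : IsOpen U) (hne : U.Nonempty) : HasPeakFunctions U := by
  obtain ⟨b, hbU, hmax⟩ :=
    exists_mem_frontier_isMaxOn_norm hb hne differentiable_id.diffContOnCl
  rw [hU.frontier_eq] at hbU
  refine hasPeakFunctions_of_re_pos (q := fun z => conj b * (b - z)) (by fun_prop)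
    (fun z hz => ?_) ?_
  · have hzb : z ≠ b := fun h => hbU.2 (h ▸ hz)
    calc (0 : ℝ) < ‖b - z‖ ^ 2 / 2 := by
          have := norm_pos_iff.2 (sub_ne_zero.2 hzb.symm)
          positivity
      _ ≤ _ := half_sq_norm_sub_le_re_conj_mul (hmax (subset_closure hz))
  · simpa using mem_closure_image
      (by fun_prop : Continuous fun z => conj b * (b - z)).continuousAt hbU.1

lemma HasPeakFunctions.exists_blend_step {U : Set ℂ} (hU : HasPeakFunctions U) {F : ℂ → ℂ}
    (hF : DifferentiableOn ℂ F U) (hF1 : MapsTo F U (closedBall 0 1)) {K : Set ℂ}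
    (hKU : K ⊆ U) (hK : IsCompact K) {w : ℂ} (hw : ‖w‖ ≤ 1) {ε : ℝ} (hε : 0 < ε) :
    ∃ G : ℂ → ℂ, DifferentiableOn ℂ G U ∧ MapsTo G U (closedBall 0 1) ∧
      (∀ x ∈ K, dist (F x) (G x) ≤ 4 * ε) ∧ ∃ z ∈ U, dist (G z) w ≤ 4 * ε := by
  obtain ⟨u, hu, hu_disk, hu_small, z, hz, hz_one⟩ := hU K hKU hK ε hε
  have hF_norm : ∀ x ∈ U, ‖F x‖ ≤ 1 := fun x hx => mem_closedBall_zero_iff.1 (hF1 hx)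
  have hu_norm : ∀ x ∈ U, ‖u x‖ ≤ 1 := fun x hx => norm_le_one_of_sq_norm_le_re (hu_disk x hx)
  refine ⟨fun x => F x * (1 - u x) ^ 2 + w * u x ^ 2,
    (hF.mul ((hu.const_sub 1).pow 2)).add ((hu.pow 2).const_mul w),
    fun x hx => mem_closedBall_zero_iff.2 (norm_blend_le_one (hF_norm x hx) hw (hu_disk x hx)),
    fun x hx => ?_, z, hz, ?_⟩
  · rw [dist_comm, dist_eq_norm]
    exact (norm_blend_sub_left_le (hF_norm x (hKU hx)) hw (hu_norm x (hKU hx))).trans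
      (by linarith [hu_small x hx])
  · rw [dist_eq_norm]
    refine (norm_blend_sub_right_le (hF_norm z hz) hw (hu_norm z hz)).trans ?_
    rw [norm_sub_rev]
    linarith

structure ApproximationScheme (U : Set ℂ) (L : ℕ → Set ℂ) (w : ℕ → ℂ) where
  F : ℕ → ℂ → ℂ
  K : ℕ → Set ℂ
  z : ℕ → ℂ
  differentiableOn : ∀ n, DifferentiableOn ℂ (F n) U
  mapsTo : ∀ n, MapsTo (F n) U (closedBall 0 1)
  K_subset : ∀ n, K n ⊆ U
  K_mono : Monotone K
  L_subset : ∀ n, L n ⊆ K n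
  dist_succ_le : ∀ n, ∀ x ∈ K n, dist (F n x) (F (n + 1) x) ≤ 4 / 2 ^ n
  z_mem : ∀ n, z n ∈ K (n + 1)
  dist_target_le : ∀ n, dist (F (n + 1) (z n)) (w n) ≤ 4 / 2 ^ n

lemma HasPeakFunctions.nonempty_approximationScheme {U : Set ℂ} (hU : HasPeakFunctions U)
    {L : ℕ → Set ℂ} (hL : ∀ n, IsCompact (L n)) (hLU : ∀ n, L n ⊆ U) {w : ℕ → ℂ}
    (hw : ∀ n, ‖w n‖ ≤ 1) : Nonempty (ApproximationScheme U L w) := by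
  -- A state is the current approximant together with the compact set of points (earlier `L k`
  -- and hit points) that later corrections must leave almost unchanged.
  let State := {p : (ℂ → ℂ) × Set ℂ //
    DifferentiableOn ℂ p.1 U ∧ MapsTo p.1 U (closedBall 0 1) ∧ IsCompact p.2 ∧ p.2 ⊆ U}
  have step : ∀ (n : ℕ) (s : State), ∃ t : State, ∃ z ∈ t.1.2, s.1.2 ∪ L n ⊆ t.1.2 ∧
      (∀ x ∈ s.1.2 ∪ L n, dist (s.1.1 x) (t.1.1 x) ≤ 4 / 2 ^ n) ∧
      dist (t.1.1 z) (w n) ≤ 4 / 2 ^ n := by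
    rintro n ⟨⟨F, C⟩, hF, hF1, hC, hCU⟩
    obtain ⟨G, hG, hG1, hFG, z, hz, hGz⟩ := hU.exists_blend_step hF hF1
      (union_subset hCU (hLU n)) (hC.union (hL n)) (hw n)
      (by positivity : (0 : ℝ) < 1 / 2 ^ n)
    refine ⟨⟨(G, C ∪ L n ∪ {z}), hG, hG1, (hC.union (hL n)).union isCompact_singleton,
      union_subset (union_subset hCU (hLU n)) (singleton_subset_iff.2 hz)⟩,
      z, Or.inr rfl, subset_union_left, fun x hx => (hFG x hx).trans_eq (mul_one_div _ _),
      hGz.trans_eq (mul_one_div _ _)⟩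
  choose next z hz hsub hdist htarget using step
  let s : ℕ → State := fun n => Nat.rec ⟨(0, ∅), differentiableOn_const 0,
    fun _ _ => by simp, isCompact_empty, empty_subset U⟩ (fun k sk => next k sk) n
  have hK_succ : ∀ n, (s n).1.2 ∪ L n ⊆ (s (n + 1)).1.2 := fun n => hsub n (s n)
  exact ⟨{
    F := fun n => (s n).1.1
    K := fun n => (s n).1.2 ∪ L n
    z := fun n => z n (s n)
    differentiableOn := fun n => (s n).2.1
    mapsTo := fun n => (s n).2.2.1
    K_subset := fun n => union_subset (s n).2.2.2.2 (hLU n)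
    K_mono := monotone_nat_of_le_succ fun n => (hK_succ n).trans subset_union_left
    L_subset := fun _ => subset_union_right
    dist_succ_le := fun n => hdist n (s n)
    z_mem := fun n => Or.inl (hz n (s n))
    dist_target_le := fun n => htarget n (s n) }⟩

lemma tendsto_div_two_pow_atTop (C : ℝ) : Tendsto (fun n : ℕ => C / 2 ^ n) atTop (𝓝 0) :=
  tendsto_const_nhds.div_atTop (tendsto_pow_atTop_atTop_of_one_lt one_lt_two)

lemma dist_limUnder_le_of_le_geometric_two {α : Type*} [MetricSpace α] [CompleteSpace α]
    [Nonempty α] {f : ℕ → α} {C : ℝ} {m : ℕ}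
    (hf : ∀ n, m ≤ n → dist (f n) (f (n + 1)) ≤ C / 2 / 2 ^ n)
    {n : ℕ} (hn : m ≤ n) : dist (f n) (limUnder atTop f) ≤ C / 2 ^ n := by
  have hg : ∀ k, dist (f (k + n)) (f (k + 1 + n)) ≤ C / 2 ^ n / 2 / 2 ^ k := fun k => by
    rw [add_right_comm]
    exact (hf (k + n) (by omega)).trans_eq (by rw [pow_add]; ring)
  obtain ⟨a, ha⟩ := cauchySeq_tendsto_of_complete (cauchySeq_of_le_geometric_two hg)
  rw [((tendsto_add_atTop_iff_nat n).1 ha).limUnder_eq]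
  simpa using dist_le_of_le_geometric_two_of_tendsto₀ hg ha

namespace ApproximationScheme

variable {U : Set ℂ} {L : ℕ → Set ℂ} {w : ℕ → ℂ} (S : ApproximationScheme U L w)

-- Junk outside the set where `S.F · x` converges; only its values on `U` matter.
noncomputable def limit (x : ℂ) : ℂ := limUnder atTop fun n => S.F n x

lemma dist_limit_le {m n : ℕ} (hmn : m ≤ n) {x : ℂ} (hx : x ∈ S.K m) :
    dist (S.F n x) (S.limit x) ≤ 8 / 2 ^ n :=
  dist_limUnder_le_of_le_geometric_two (C := 8)
    (fun k hk => (S.dist_succ_le k x (S.K_mono hk hx)).trans_eq (by ring)) hmn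

lemma tendstoUniformlyOn_limit (m : ℕ) : TendstoUniformlyOn S.F S.limit atTop (S.K m) := by
  refine Metric.tendstoUniformlyOn_iff.2 fun ε hε => ?_
  filter_upwards [eventually_ge_atTop m, (tendsto_div_two_pow_atTop 8).eventually (gt_mem_nhds hε)]
    with n hmn hn x hx
  rw [dist_comm]
  exact (S.dist_limit_le hmn hx).trans_lt hn

lemma differentiableOn_limit (hU : IsOpen U) (hL : ∀ x ∈ U, ∃ n, L n ∈ 𝓝 x) :
    DifferentiableOn ℂ S.limit U := by
  refine TendstoLocallyUniformlyOn.differentiableOn (φ := atTop)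
    (tendstoLocallyUniformlyOn_of_forall_exists_nhds fun x hx => ?_)
    (Eventually.of_forall S.differentiableOn) hU
  obtain ⟨n, hn⟩ := hL x hx
  exact ⟨S.K n, mem_nhdsWithin_of_mem_nhds (mem_of_superset hn (S.L_subset n)),
    S.tendstoUniformlyOn_limit n⟩

lemma tendsto_limit {x : ℂ} {m : ℕ} (hx : x ∈ S.K m) :
    Tendsto (fun n => S.F n x) atTop (𝓝 (S.limit x)) :=
  (S.tendstoUniformlyOn_limit m).tendsto_at hx

lemma mapsTo_limit (hL : U ⊆ ⋃ n, L n) : MapsTo S.limit U (closedBall 0 1) := by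
  intro x hx
  obtain ⟨m, hm⟩ := mem_iUnion.1 (hL hx)
  exact isClosed_closedBall.mem_of_tendsto (S.tendsto_limit (S.L_subset m hm))
    (Eventually.of_forall fun n => S.mapsTo n hx)

lemma dist_limit_target_le (n : ℕ) : dist (S.limit (S.z n)) (w n) ≤ 8 / 2 ^ n :=
  calc dist (S.limit (S.z n)) (w n)
      ≤ dist (S.F (n + 1) (S.z n)) (S.limit (S.z n)) + dist (S.F (n + 1) (S.z n)) (w n) :=
        dist_triangle_left _ _ _
    _ ≤ 8 / 2 ^ (n + 1) + 4 / 2 ^ n :=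
        add_le_add (S.dist_limit_le le_rfl (S.z_mem n)) (S.dist_target_le n)
    _ = 8 / 2 ^ n := by rw [pow_succ]; ring

end ApproximationScheme

lemma IsOpen.exists_seq_isCompact_mem_nhds {X : Type*} [TopologicalSpace X]
    [LocallyCompactSpace X] [SecondCountableTopology X] {U : Set X} (hU : IsOpen U) :
    ∃ L : ℕ → Set X, (∀ n, IsCompact (L n)) ∧ (∀ n, L n ⊆ U) ∧ ∀ x ∈ U, ∃ n, L n ∈ 𝓝 x := by
  have := hU.locallyCompactSpace
  let E := CompactExhaustion.choice U
  refine ⟨fun n => Subtype.val '' E n, fun n => (E.isCompact n).image continuous_subtype_val,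
    fun n => Subtype.coe_image_subset U _, fun x hx => ?_⟩
  obtain ⟨n, hn⟩ := E.exists_mem_nhds ⟨x, hx⟩
  exact ⟨n, hU.isOpenMap_subtype_val.image_mem_nhds hn⟩

lemma exists_seq_forall_mapClusterPt (X : Type*) [TopologicalSpace X]
    [TopologicalSpace.SeparableSpace X] [Nonempty X] :
    ∃ v : ℕ → X, ∀ x, MapClusterPt x atTop v := by
  obtain ⟨u, hu⟩ := TopologicalSpace.exists_dense_seq X
  refine ⟨fun n => u n.unpair.1, fun x => mapClusterPt_iff_frequently.2 fun s hs => ?_⟩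
  obtain ⟨k, hk⟩ := hu.exists_mem_open isOpen_interior ⟨x, mem_interior_iff_mem_nhds.2 hs⟩
  refine frequently_atTop.2 fun N => ⟨Nat.pair k N, Nat.right_le_pair k N, ?_⟩
  simpa using interior_subset hk

lemma mem_closure_range_of_mapClusterPt {α : Type*} [PseudoMetricSpace α] {g v : ℕ → α} {x : α}
    (hx : MapClusterPt x atTop v) (hgv : Tendsto (fun n => dist (g n) (v n)) atTop (𝓝 0)) :
    x ∈ closure (range g) := by
  refine Metric.mem_closure_iff.2 fun ε hε => ?_
  obtain ⟨n, hxn, hgn⟩ :=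
    ((mapClusterPt_iff_frequently.1 hx _ (ball_mem_nhds x (half_pos hε))).and_eventually
      (hgv.eventually (gt_mem_nhds (half_pos hε)))).exists
  refine ⟨g n, mem_range_self n, ?_⟩
  calc dist x (g n) ≤ dist (v n) x + dist (v n) (g n) := dist_triangle_left _ _ _
    _ < ε / 2 + ε / 2 := add_lt_add hxn (by rwa [dist_comm])
    _ = ε := add_halves ε

lemma DifferentiableOn.mapsTo_ball_of_mapsTo_closedBall {E F : Type*} [NormedAddCommGroup E]
    [NormedSpace ℂ E] [NormedAddCommGroup F] [NormedSpace ℂ F] [StrictConvexSpace ℝ F]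
    {f : E → F} {U : Set E} {r : ℝ} (hf : DifferentiableOn ℂ f U) (hc : IsPreconnected U)
    (ho : IsOpen U) (hr : MapsTo f U (closedBall 0 r)) (h : ∃ z ∈ U, ‖f z‖ < r) :
    MapsTo f U (ball 0 r) := by
  intro c hc'
  rw [mem_ball_zero_iff]
  refine (mem_closedBall_zero_iff.1 (hr hc')).lt_of_ne fun hcr => ?_
  have hmax : IsMaxOn (fun y => ‖f y‖) U c := fun y hy =>
    (mem_closedBall_zero_iff.1 (hr hy)).trans hcr.symm.le
  obtain ⟨z, hz, hzr⟩ := h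
  have := Complex.eqOn_of_isPreconnected_of_isMaxOn_norm hc ho hf hc' hmax hz
  simp only [Function.const_apply] at this
  exact hzr.ne (this ▸ hcr)

/-- Let `U` be a nonempty bounded connected open subset of `ℂ`. Then there exists a
holomorphic function `ρ : U → ℂ` with `ρ(U) ⊆ Δ = {z : |z| < 1}` whose image is dense
in the unit disk `Δ`. -/
theorem dense_image_in_disk_of_bounded_domain (U : Set ℂ)
    (hU_open : IsOpen U) (hU_conn : IsConnected U) (hU_bdd : Bornology.IsBounded U) :
    ∃ ρ : ℂ → ℂ, DifferentiableOn ℂ ρ U ∧ ρ '' U ⊆ Metric.ball (0 : ℂ) 1 ∧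
      Metric.ball (0 : ℂ) 1 ⊆ closure (ρ '' U) := by
  obtain ⟨L, hL, hLU, hL_nhds⟩ := hU_open.exists_seq_isCompact_mem_nhds
  have hL_cover : U ⊆ ⋃ n, L n := fun x hx =>
    mem_iUnion.2 ((hL_nhds x hx).imp fun _ => mem_of_mem_nhds)
  obtain ⟨v, hv⟩ := exists_seq_forall_mapClusterPt (ball (0 : ℂ) 1)
  obtain ⟨S⟩ := (hU_bdd.hasPeakFunctions hU_open hU_conn.nonempty).nonempty_approximationScheme
    hL hLU (w := fun n => v n) fun n => (mem_ball_zero_iff.1 (v n).2).le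
  have hz_image : range (fun n => S.limit (S.z n)) ⊆ S.limit '' U :=
    range_subset_iff.2 fun n => mem_image_of_mem _ (S.K_subset _ (S.z_mem n))
  have hdense : ball (0 : ℂ) 1 ⊆ closure (S.limit '' U) := fun x hx =>
    closure_mono hz_image <| mem_closure_range_of_mapClusterPt
      ((hv ⟨x, hx⟩).continuousAt_comp continuous_subtype_val.continuousAt)
      (squeeze_zero (fun _ => dist_nonneg) S.dist_limit_target_le (tendsto_div_two_pow_atTop 8))
  have hsmall : ∃ z ∈ U, ‖S.limit z‖ < 1 := by
    obtain ⟨_, ⟨z, hz, rfl⟩, hz1⟩ :=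
      Metric.mem_closure_iff.1 (hdense (mem_ball_self one_pos)) 1 one_pos
    exact ⟨z, hz, by simpa using hz1⟩
  have hdiff := S.differentiableOn_limit hU_open hL_nhds
  exact ⟨S.limit, hdiff, (hdiff.mapsTo_ball_of_mapsTo_closedBall hU_conn.isPreconnected
    hU_open (S.mapsTo_limit hL_cover) hsmall).image_subset, hdense⟩
end

section
/- Let U be a bounded connected open subset of ℂ and p ∈ U. Then there exists a holomorphic function ρ : U → ℂ with ρ(U) ⊆ Δ = {z ∈ ℂ : |z| < 1} and ρ(p) = 0 such that for every holomorphic f : U → ℂ with f(U) ⊆ Δ and f(p) = 0 one has |f'(p)| ≤ |ρ'(p)|. -/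
open Set Metric Filter Function Topology

namespace AhlforsAux

/-- The family of competitors, extended by `0` outside `U` and with the closed-ball
constraint. -/
def Fam (U : Set ℂ) (p : ℂ) : Set (ℂ → ℂ) :=
  {g | DifferentiableOn ℂ g U ∧ (∀ z ∈ U, ‖g z‖ ≤ 1) ∧ g p = 0 ∧ ∀ z ∉ U, g z = 0}

variable {U : Set ℂ} {p : ℂ}

/-- Cauchy estimate. -/
lemma cauchy_bound {g : ℂ → ℂ} (hg : DifferentiableOn ℂ g U)
    (hb : ∀ z ∈ U, ‖g z‖ ≤ 1) {w : ℂ} {r : ℝ} (hr : 0 < r)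
    (hsub : closedBall w r ⊆ U) : ‖deriv g w‖ ≤ 1 / r := by
  have h1 : DiffContOnCl ℂ g (ball w r) := by
    apply DifferentiableOn.diffContOnCl
    rw [closure_ball w hr.ne']
    exact hg.mono hsub
  have := Complex.norm_deriv_le_of_forall_mem_sphere_norm_le hr h1
    (C := 1) (fun z hz => hb z (hsub (sphere_subset_closedBall hz)))
  simpa [one_div] using this

lemma equicont (hU : IsOpen U) {K : Set ℂ} (hK : K ⊆ U) :
    EquicontinuousOn (fun i : Fam U p => (i : ℂ → ℂ)) K := by
  intro z hz
  refine EquicontinuousAt.equicontinuousWithinAt ?_ K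
  rw [Metric.equicontinuousAt_iff]
  obtain ⟨r', hr', hball⟩ := Metric.isOpen_iff.1 hU z (hK hz)
  set r : ℝ := r' / 4 with hr_def
  have hr : 0 < r := by positivity
  have hderiv : ∀ (i : Fam U p), ∀ w ∈ ball z r, ‖deriv (i : ℂ → ℂ) w‖ ≤ 1 / r := by
    intro i w hw
    refine cauchy_bound i.2.1 i.2.2.1 hr ?_
    intro x hx
    apply hball
    have : dist x z < r' := by
      calc dist x z ≤ dist x w + dist w z := dist_triangle _ _ _
        _ ≤ r + r := add_le_add (mem_closedBall.1 hx) (mem_ball.1 hw).le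
        _ < r' := by rw [hr_def]; linarith
    exact this
  intro ε hε
  refine ⟨min r (ε * r / 2), by positivity, fun x hx i => ?_⟩
  rw [dist_comm]
  have hxball : x ∈ ball z r := mem_ball.2 (lt_of_lt_of_le hx (min_le_left _ _))
  have hzball : z ∈ ball z r := mem_ball_self hr
  have hlip : ‖(i : ℂ → ℂ) x - (i : ℂ → ℂ) z‖ ≤ (1 / r) * ‖x - z‖ := by
    refine (convex_ball z r).norm_image_sub_le_of_norm_deriv_le
      (fun w hw => ?_) (fun w hw => hderiv i w hw) hzball hxball
    exact (i.2.1.differentiableAt (hU.mem_nhds (hball (mem_ball.2 (by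
      have := mem_ball.1 hw; rw [hr_def] at this; linarith)))))
  have : dist ((i : ℂ → ℂ) x) ((i : ℂ → ℂ) z) ≤ (1 / r) * dist x z := by
    simpa [dist_eq_norm] using hlip
  calc dist ((i : ℂ → ℂ) x) ((i : ℂ → ℂ) z) ≤ (1 / r) * dist x z := this
    _ ≤ (1 / r) * (ε * r / 2) :=
        mul_le_mul_of_nonneg_left (le_of_lt (lt_of_lt_of_le hx (min_le_right _ _)))
          (by positivity)
    _ = ε / 2 := by field_simp
    _ < ε := by linarith

/-- Montel-type statement: pointwise convergence within the family implies locally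
uniform convergence on `U`. -/
lemma montel (hU : IsOpen U) (ℱ : Filter (Fam U p)) {g : ℂ → ℂ}
    (hg : Tendsto (fun i : Fam U p => (i : ℂ → ℂ)) ℱ (𝓝 g)) :
    TendstoLocallyUniformlyOn (fun i : Fam U p => (i : ℂ → ℂ)) g ℱ U := by
  set 𝔖 : Set (Set ℂ) := {K | K ⊆ U ∧ IsCompact K} with h𝔖
  have 𝔖_compact : ∀ K ∈ 𝔖, IsCompact K := fun K hK => hK.2
  have F_eqcont : ∀ K ∈ 𝔖, EquicontinuousOn (fun i : Fam U p => (i : ℂ → ℂ)) K :=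
    fun K hK => equicont hU hK.1
  have key := (EquicontinuousOn.tendsto_uniformOnFun_iff_pi' 𝔖_compact F_eqcont ℱ g).2
  have hrestr : Tendsto ((⋃₀ 𝔖).restrict ∘ (fun i : Fam U p => (i : ℂ → ℂ))) ℱ
      (𝓝 <| (⋃₀ 𝔖).restrict g) :=
    ((Pi.continuous_restrict _).tendsto g).comp hg
  have := key hrestr
  rw [UniformOnFun.tendsto_iff_tendstoUniformlyOn] at this
  rw [tendstoLocallyUniformlyOn_iff_forall_isCompact hU]
  intro K hKU hK
  exact this K ⟨hKU, hK⟩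

lemma fam_isClosed (hU : IsOpen U) : IsClosed (Fam U p) := by
  rw [← closure_subset_iff_isClosed]
  intro g hg
  obtain ⟨u, hu𝒢, hu⟩ := mem_closure_iff_ultrafilter.1 hg
  haveI : (Filter.comap (fun i : Fam U p => (i : ℂ → ℂ)) (u : Filter (ℂ → ℂ))).NeBot :=
    Filter.NeBot.comap_of_range_mem u.neBot (by rwa [Subtype.range_coe])
  set ℱ : Filter (Fam U p) := Filter.comap (fun i : Fam U p => (i : ℂ → ℂ)) u
  have hT : Tendsto (fun i : Fam U p => (i : ℂ → ℂ)) ℱ (𝓝 g) :=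
    tendsto_comap.mono_right hu
  have hTLU := montel hU ℱ hT
  have hdiff : DifferentiableOn ℂ g U :=
    hTLU.differentiableOn (Eventually.of_forall fun i => i.2.1) hU
  have hpt : ∀ z, Tendsto (fun i : Fam U p => (i : ℂ → ℂ) z) ℱ (𝓝 (g z)) := by
    intro z
    exact ((continuous_apply z).tendsto g).comp hT
  refine ⟨hdiff, fun z hz => ?_, ?_, fun z hz => ?_⟩
  · exact le_of_tendsto ((continuous_norm.tendsto _).comp (hpt z))
      (Eventually.of_forall fun i => i.2.2.1 z hz)
  · refine (tendsto_nhds_unique (Tendsto.congr'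
      (Eventually.of_forall fun i : Fam U p => (i.2.2.2.1 : _)) (hpt p)) tendsto_const_nhds :)
  · refine (tendsto_nhds_unique (Tendsto.congr'
      (Eventually.of_forall fun i : Fam U p => (i.2.2.2.2 z hz : _)) (hpt z))
      tendsto_const_nhds :)

lemma fam_isCompact (hU : IsOpen U) (hp : p ∈ U) : IsCompact (Fam U p) := by
  refine IsCompact.of_isClosed_subset
    (isCompact_univ_pi fun _ : ℂ => isCompact_closedBall (0 : ℂ) 1)
    (fam_isClosed hU) (fun g hg => ?_)
  rw [Set.mem_univ_pi]
  intro z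
  rw [mem_closedBall_zero_iff]
  by_cases hz : z ∈ U
  · exact hg.2.1 z hz
  · simp [hg.2.2.2 z hz]

lemma deriv_continuous (hU : IsOpen U) (hp : p ∈ U) :
    Continuous (fun i : Fam U p => deriv (i : ℂ → ℂ) p) := by
  rw [continuous_iff_continuousAt]
  intro i₀
  have hT : Tendsto (fun i : Fam U p => (i : ℂ → ℂ)) (𝓝 i₀) (𝓝 (i₀ : ℂ → ℂ)) :=
    continuous_subtype_val.tendsto i₀
  have hTLU := (montel hU _ hT).deriv (Eventually.of_forall fun i => i.2.1) hU
  exact hTLU.tendsto_at hp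

end AhlforsAux

open AhlforsAux in
/-- For every bounded connected open subset `U ⊆ ℂ` and every `p ∈ U` there exists a
holomorphic map `ρ : U → Δ` with `ρ(p) = 0` maximizing `|ρ'(p)|` among all holomorphic
maps `f : U → Δ` with `f(p) = 0` (an "Ahlfors-type" extremal map). -/
theorem exists_extremal_map_to_disk (U : Set ℂ) (hU_open : IsOpen U)
    (hU_conn : IsConnected U) (hU_bdd : Bornology.IsBounded U) (p : ℂ) (hp : p ∈ U) :
    ∃ ρ : ℂ → ℂ, DifferentiableOn ℂ ρ U ∧ ρ '' U ⊆ Metric.ball (0 : ℂ) 1 ∧ ρ p = 0 ∧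
      ∀ f : ℂ → ℂ, DifferentiableOn ℂ f U → f '' U ⊆ Metric.ball (0 : ℂ) 1 → f p = 0 →
        ‖deriv f p‖ ≤ ‖deriv ρ p‖ := by
  classical
  obtain ⟨R, hR⟩ := hU_bdd.subset_closedBall p
  set R' : ℝ := max R 1 with hR'def
  have hR' : (0 : ℝ) < R' := lt_of_lt_of_le one_pos (le_max_right _ _)
  set c : ℂ := ((2 * R' : ℝ) : ℂ)⁻¹ with hc_def
  have hcnorm : ‖c‖ = (2 * R')⁻¹ := by
    rw [hc_def, norm_inv, Complex.norm_real, Real.norm_eq_abs, abs_of_pos (by linarith)]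
  set f₀ : ℂ → ℂ := fun z => c * (z - p) with hf₀def
  have hf₀deriv : deriv f₀ p = c := by
    have : HasDerivAt f₀ (c * 1) p := ((hasDerivAt_id p).sub_const p).const_mul c
    simpa using this.deriv
  have hindeq : U.EqOn (U.indicator f₀) f₀ := fun z hz => Set.indicator_of_mem hz f₀
  have hf₀mem : U.indicator f₀ ∈ Fam U p := by
    refine ⟨DifferentiableOn.congr (((differentiable_const c).mul
      (differentiable_id.sub_const p)).differentiableOn) hindeq, fun z hz => ?_, ?_, ?_⟩
    · rw [hindeq hz, hf₀def]
      have hz' : ‖z - p‖ ≤ R' := le_trans (by simpa [dist_eq_norm] using hR hz)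
        (le_max_left _ _)
      calc ‖c * (z - p)‖ = (2 * R')⁻¹ * ‖z - p‖ := by rw [norm_mul, hcnorm]
        _ ≤ (2 * R')⁻¹ * R' := by
            exact mul_le_mul_of_nonneg_left hz' (by positivity)
        _ ≤ 1 := by rw [← div_eq_inv_mul]; rw [div_le_one (by linarith)]; linarith
    · simp [hindeq hp, hf₀def]
    · exact fun z hz => Set.indicator_of_notMem hz f₀
  have hind_deriv : deriv (U.indicator f₀) p = c := by
    rw [Filter.EventuallyEq.deriv_eq (Filter.eventuallyEq_of_mem
      (hU_open.mem_nhds hp) hindeq), hf₀deriv]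
  have hφcont : ContinuousOn (fun g : ℂ → ℂ => ‖deriv g p‖) (Fam U p) := by
    rw [continuousOn_iff_continuous_restrict]
    exact continuous_norm.comp (deriv_continuous hU_open hp)
  obtain ⟨ρ, hρmem, hmax⟩ := (fam_isCompact hU_open hp).exists_isMaxOn
    ⟨_, hf₀mem⟩ hφcont
  have hρpos : 0 < ‖deriv ρ p‖ := by
    have h1 : ‖deriv (U.indicator f₀) p‖ ≤ ‖deriv ρ p‖ := hmax hf₀mem
    rw [hind_deriv] at h1
    calc (0 : ℝ) < ‖c‖ := by rw [hcnorm]; positivity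
      _ ≤ ‖deriv ρ p‖ := h1
  have hρball : ∀ z ∈ U, ‖ρ z‖ < 1 := by
    intro z hz
    rcases lt_or_eq_of_le (hρmem.2.1 z hz) with h | h
    · exact h
    · exfalso
      have hmaxnorm : IsMaxOn (norm ∘ ρ) U z := fun w hw => by
        simpa [h] using hρmem.2.1 w hw
      have heq := Complex.eqOn_of_isPreconnected_of_isMaxOn_norm
        hU_conn.isPreconnected hU_open hρmem.1 hz hmaxnorm
      have : ρ p = ρ z := heq hp
      rw [hρmem.2.2.1] at this
      rw [← this] at h
      simp at h
  refine ⟨ρ, hρmem.1, ?_, hρmem.2.2.1, ?_⟩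
  · rintro _ ⟨z, hz, rfl⟩
    rw [Metric.mem_ball, dist_zero_right]
    exact hρball z hz
  · intro f hf hfball hfp
    have hfeq : U.EqOn (U.indicator f) f := fun z hz => Set.indicator_of_mem hz f
    have hfmem : U.indicator f ∈ Fam U p := by
      refine ⟨DifferentiableOn.congr hf hfeq, fun z hz => ?_, by simp [hfeq hp, hfp],
        fun z hz => Set.indicator_of_notMem hz f⟩
      rw [hfeq hz]
      exact le_of_lt (by simpa [dist_zero_right] using hfball ⟨z, hz, rfl⟩)
    have hfd : deriv (U.indicator f) p = deriv f p :=
      Filter.EventuallyEq.deriv_eq (Filter.eventuallyEq_of_mem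
        (hU_open.mem_nhds hp) hfeq)
    have h2 : ‖deriv (U.indicator f) p‖ ≤ ‖deriv ρ p‖ := hmax hfmem
    rwa [hfd] at h2
end

section
/- The map g : Δ → ℂ² defined on the unit disk Δ = {w ∈ ℂ : |w| < 1} by g(w) = ( (1/2)·(exp((w+1)/(w-1)) + exp(√2·(w+1)/(w-1))), (1/2)·(exp(√3·(w+1)/(w-1)) + exp(√5·(w+1)/(w-1))) ) is holomorphic on Δ, takes values in the bidisk Δ² = {(v₁,v₂) ∈ ℂ² : |v₁| < 1 and |v₂| < 1}, and its image g(Δ) is dense in Δ². -/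
/-!
The Möbius map `z = (w + 1) / (w - 1)` sends the unit disk onto the left half-plane, and `g = M ∘ z`
with `M z = (½(e^z + e^{√2 z}), ½(e^{√3 z} + e^{√5 z}))`. The closure of the image of the half-plane
contains `M (2πit)` for real `t`, which is the image of the point `t (1, √2, √3, √5)` of the torus
`(ℝ/ℤ)⁴` under `x ↦ (½(e(x₀) + e(x₁)), ½(e(x₂) + e(x₃)))`, `e(s) = e^{2πis}`; this map sends the
torus onto the closed bidisk. As `1, √2, √3, √5` are linearly independent over `ℤ`, the line
`t (1, √2, √3, √5)` is dense in the torus (Kronecker).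

Kronecker's theorem follows from Weyl's argument: the time averages of a non-constant character
along the line tend to `0`, so by density of trigonometric polynomials the time averages of any
continuous function along two parallel lines have the same limit. The distance to the line vanishes
on the line but is constant and positive on the parallel line through a point off its closure.
-/

open Complex Filter Topology Set Metric
open scoped Real

lemma Irrational.eq_zero_of_intCast_add_intCast_mul {x : ℝ} (hx : Irrational x) {p q : ℤ}
    (h : (p : ℝ) + q * x = 0) : p = 0 ∧ q = 0 := by
  obtain rfl : q = 0 := by
    by_contra hq
    exact ((hx.intCast_mul hq).intCast_add p).ne_zero h
  exact ⟨by simpa using h, rfl⟩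

lemma eq_zero_of_intCast_add_mul_add_mul {x y : ℝ} {m n : ℤ} (hxm : x ^ 2 = m) (hyn : y ^ 2 = n)
    (hx : Irrational x) (hy : Irrational y) (hxy : Irrational (x * y)) {p q r : ℤ}
    (h : (p : ℝ) + q * x + r * y = 0) : p = 0 ∧ q = 0 ∧ r = 0 := by
  have hsq : ((q ^ 2 * m - p ^ 2 - r ^ 2 * n : ℤ) : ℝ) + ((-2 * p * r : ℤ) : ℝ) * y = 0 := by
    push_cast
    linear_combination (q * x - p - r * y) * h - q ^ 2 * hxm + r ^ 2 * hyn
  have hpr : p * r = 0 := by linarith [(hy.eq_zero_of_intCast_add_intCast_mul hsq).2]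
  rcases mul_eq_zero.1 hpr with rfl | rfl
  · have hm : m ≠ 0 := by
      rintro rfl
      exact hx.ne_zero (pow_eq_zero_iff two_ne_zero |>.1 (by exact_mod_cast hxm))
    have hqr : ((q * m : ℤ) : ℝ) + r * (x * y) = 0 := by
      push_cast
      linear_combination x * h - q * hxm
    obtain ⟨hqm, hr⟩ := hxy.eq_zero_of_intCast_add_intCast_mul hqr
    exact ⟨rfl, (mul_eq_zero.1 hqm).resolve_right hm, hr⟩
  · obtain ⟨hp, hq⟩ := hx.eq_zero_of_intCast_add_intCast_mul (by simpa using h)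
    exact ⟨hp, hq, rfl⟩

lemma irrational_sqrt_mul_sqrt {m n : ℕ} (h : ¬IsSquare (m * n)) :
    Irrational (√m * √n) := by
  rw [← Real.sqrt_mul (Nat.cast_nonneg m), ← Nat.cast_mul]
  exact irrational_sqrt_natCast_iff.2 h

theorem linearIndependent_one_sqrt_two_sqrt_three_sqrt_five :
    LinearIndependent ℤ ![1, √2, √3, √5] := by
  rw [Fintype.linearIndependent_iff]
  intro g hg
  simp only [Fin.sum_univ_four, Matrix.cons_val, zsmul_eq_mul, mul_one] at hg
  have s2 : √2 ^ 2 = ((2 : ℤ) : ℝ) := by norm_num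
  have s3 : √3 ^ 2 = ((3 : ℤ) : ℝ) := by norm_num
  have s5 : √5 ^ 2 = ((5 : ℤ) : ℝ) := by norm_num
  have s15 : √15 ^ 2 = ((15 : ℤ) : ℝ) := by norm_num
  have irr2 : Irrational √2 := irrational_sqrt_ofNat_iff.2 (by norm_num)
  have irr3 : Irrational √3 := irrational_sqrt_ofNat_iff.2 (by norm_num)
  have irr5 : Irrational √5 := irrational_sqrt_ofNat_iff.2 (by norm_num)
  have irr15 : Irrational √15 := irrational_sqrt_ofNat_iff.2 (by norm_num)
  -- squaring `g 0 + g 1 √2 = -(g 2 √3 + g 3 √5)` leaves a relation between `1`, `√2` and `√15`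
  have key : ((g 0 ^ 2 + 2 * g 1 ^ 2 - 3 * g 2 ^ 2 - 5 * g 3 ^ 2 : ℤ) : ℝ)
      + ((2 * g 0 * g 1 : ℤ) : ℝ) * √2 + ((-2 * g 2 * g 3 : ℤ) : ℝ) * √15 = 0 := by
    rw [show √15 = √3 * √5 by rw [← Real.sqrt_mul (by norm_num)]; norm_num]
    push_cast at s2 s3 s5 ⊢
    linear_combination (g 0 + g 1 * √2 - g 2 * √3 - g 3 * √5) * hg
      - g 1 ^ 2 * s2 + g 2 ^ 2 * s3 + g 3 ^ 2 * s5
  obtain ⟨-, -, hcd⟩ := eq_zero_of_intCast_add_mul_add_mul s2 s15 irr2 irr15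
    (by simpa using irrational_sqrt_mul_sqrt (m := 2) (n := 15) (by norm_num)) key
  have h012 : g 0 = 0 ∧ g 1 = 0 ∧ (g 2 = 0 ∧ g 3 = 0) := by
    rcases mul_eq_zero.1 (by linarith : g 2 * g 3 = 0) with h2 | h3
    · obtain ⟨h0, h1, h3⟩ := eq_zero_of_intCast_add_mul_add_mul s2 s5 irr2 irr5
        (by simpa using irrational_sqrt_mul_sqrt (m := 2) (n := 5) (by norm_num))
        (by simpa [h2] using hg)
      exact ⟨h0, h1, h2, h3⟩
    · obtain ⟨h0, h1, h2⟩ := eq_zero_of_intCast_add_mul_add_mul s2 s3 irr2 irr3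
        (by simpa using irrational_sqrt_mul_sqrt (m := 2) (n := 3) (by norm_num))
        (by simpa [h3] using hg)
      exact ⟨h0, h1, h2, h3⟩
  intro i
  fin_cases i <;> simp [h012]

lemma tendsto_average_exp_mul_I {ν : ℝ} (hν : ν ≠ 0) :
    Tendsto (fun T : ℝ => T⁻¹ • ∫ t in (0 : ℝ)..T, exp (ν * I * t)) atTop (𝓝 0) := by
  have hc : (ν * I : ℂ) ≠ 0 := mul_ne_zero (ofReal_ne_zero.2 hν) I_ne_zero
  refine tendsto_inv_atTop_zero.zero_smul_isBoundedUnder_le ⟨2 / ‖(ν * I : ℂ)‖, ?_⟩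
  refine eventually_map.2 (Eventually.of_forall fun T => ?_)
  have hexp : ∀ s : ℝ, ‖exp (ν * I * s)‖ = 1 := fun s => by
    rw [norm_exp]; simp
  simp only [Function.comp, integral_exp_mul_complex hc, norm_div]
  gcongr
  calc ‖exp (ν * I * T) - exp (ν * I * (0 : ℝ))‖
      ≤ ‖exp (ν * I * T)‖ + ‖exp (ν * I * (0 : ℝ))‖ := norm_sub_le _ _
    _ = 2 := by rw [hexp, hexp]; norm_num

namespace UnitAddTorus

variable {d : Type*} (a : d → ℝ)

def linearFlow (t : ℝ) : UnitAddTorus d := fun i => ((t * a i : ℝ) : UnitAddCircle)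

lemma linearFlow_add (s t : ℝ) : linearFlow a (s + t) = linearFlow a s + linearFlow a t := by
  funext i
  simp [linearFlow, add_mul]

lemma continuous_linearFlow : Continuous (linearFlow a) :=
  continuous_pi fun _ => (AddCircle.continuous_mk' 1).comp (continuous_id.mul continuous_const)

noncomputable def orbitAverage (f : C(UnitAddTorus d, ℂ)) (x : UnitAddTorus d) (T : ℝ) : ℂ :=
  T⁻¹ • ∫ t in (0 : ℝ)..T, f (x + linearFlow a t)

section

variable (f g : C(UnitAddTorus d, ℂ)) (x : UnitAddTorus d) (T : ℝ)

lemma intervalIntegrable_comp_add_linearFlow :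
    IntervalIntegrable (fun t => f (x + linearFlow a t)) MeasureTheory.volume 0 T :=
  (f.continuous.comp (continuous_const.add (continuous_linearFlow a))).intervalIntegrable _ _

lemma orbitAverage_add :
    orbitAverage a (f + g) x T = orbitAverage a f x T + orbitAverage a g x T := by
  simp only [orbitAverage, ContinuousMap.add_apply, smul_add,
    intervalIntegral.integral_add (intervalIntegrable_comp_add_linearFlow a f x T)
      (intervalIntegrable_comp_add_linearFlow a g x T)]

lemma orbitAverage_sub :
    orbitAverage a (f - g) x T = orbitAverage a f x T - orbitAverage a g x T := by
  simp only [orbitAverage, ContinuousMap.sub_apply, smul_sub,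
    intervalIntegral.integral_sub (intervalIntegrable_comp_add_linearFlow a f x T)
      (intervalIntegrable_comp_add_linearFlow a g x T)]

lemma orbitAverage_smul (c : ℂ) : orbitAverage a (c • f) x T = c * orbitAverage a f x T := by
  simp only [orbitAverage, ContinuousMap.smul_apply, smul_eq_mul,
    intervalIntegral.integral_const_mul, mul_smul_comm]

lemma norm_orbitAverage_le (hT : 0 < T) : ‖orbitAverage a f x T‖ ≤ ‖f‖ := by
  rw [orbitAverage, norm_smul, norm_inv, Real.norm_of_nonneg hT.le, inv_mul_le_iff₀ hT]
  simpa [abs_of_pos hT, mul_comm] using intervalIntegral.norm_integral_le_of_norm_le_const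
    (a := 0) (b := T) fun t _ => f.norm_coe_le_norm (x + linearFlow a t)

end

variable [Fintype d]

lemma mFourier_apply_add (n : d → ℤ) (x y : UnitAddTorus d) :
    mFourier n (x + y) = mFourier n x * mFourier n y := by
  simp [mFourier, smul_add, AddCircle.toCircle_add, Finset.prod_mul_distrib]

lemma mFourier_linearFlow (n : d → ℤ) (t : ℝ) :
    mFourier n (linearFlow a t) = exp ((2 * π * ∑ i, n i * a i : ℝ) * I * t) := by
  simp only [mFourier, linearFlow, ContinuousMap.coe_mk, fourier_coe_apply, ← Complex.exp_sum]
  congr 1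
  push_cast
  rw [Finset.mul_sum, Finset.sum_mul, Finset.sum_mul]
  exact Finset.sum_congr rfl fun i _ => by ring

lemma orbitAverage_mFourier (n : d → ℤ) (x : UnitAddTorus d) (T : ℝ) :
    orbitAverage a (mFourier n) x T
      = mFourier n x * T⁻¹ • ∫ t in (0 : ℝ)..T, exp ((2 * π * ∑ i, n i * a i : ℝ) * I * t) := by
  simp only [orbitAverage, mFourier_apply_add, mFourier_linearFlow,
    intervalIntegral.integral_const_mul, mul_smul_comm]

variable {a}

lemma sum_mul_ne_zero_of_linearIndependent (ha : LinearIndependent ℤ a)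
    {n : d → ℤ} (hn : n ≠ 0) : ∑ i, n i * a i ≠ 0 := by
  intro h
  refine hn (funext (Fintype.linearIndependent_iff.1 ha n ?_))
  simpa [zsmul_eq_mul] using h

lemma tendsto_orbitAverage_sub_of_mem_span (ha : LinearIndependent ℤ a)
    {f : C(UnitAddTorus d, ℂ)} (hf : f ∈ Submodule.span ℂ (range mFourier))
    (x y : UnitAddTorus d) :
    Tendsto (fun T => orbitAverage a f x T - orbitAverage a f y T) atTop (𝓝 0) := by
  induction hf using Submodule.span_induction with
  | mem _ hf =>
    obtain ⟨n, rfl⟩ := hf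
    rcases eq_or_ne n 0 with rfl | hn
    · simp [orbitAverage, mFourier_zero]
    · have hν : 2 * π * ∑ i, n i * a i ≠ 0 :=
        mul_ne_zero (by positivity) (sum_mul_ne_zero_of_linearIndependent ha hn)
      simp only [orbitAverage_mFourier, ← sub_mul]
      simpa using (tendsto_average_exp_mul_I hν).const_mul (mFourier n x - mFourier n y)
  | zero => simp [orbitAverage]
  | add f g _ _ hf hg =>
    simpa only [orbitAverage_add, add_sub_add_comm, add_zero] using hf.add hg
  | smul c f _ hf =>
    simpa only [orbitAverage_smul, ← mul_sub, mul_zero] using hf.const_mul c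

theorem tendsto_orbitAverage_sub (ha : LinearIndependent ℤ a)
    (f : C(UnitAddTorus d, ℂ)) (x y : UnitAddTorus d) :
    Tendsto (fun T => orbitAverage a f x T - orbitAverage a f y T) atTop (𝓝 0) := by
  rw [Metric.tendsto_atTop]
  intro ε hε
  have hf : f ∈ closure (Submodule.span ℂ (range (mFourier (d := d))) : Set _) := by
    rw [← Submodule.topologicalClosure_coe, span_mFourier_closure_eq_top]; trivial
  obtain ⟨p, hp, hfp⟩ := Metric.mem_closure_iff.1 hf (ε / 4) (by positivity)
  obtain ⟨N, hN⟩ := Metric.tendsto_atTop.1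
    (tendsto_orbitAverage_sub_of_mem_span ha hp x y) (ε / 2) (by positivity)
  refine ⟨max N 1, fun T hTN => ?_⟩
  have hT : 0 < T := lt_of_lt_of_le one_pos (le_of_max_le_right hTN)
  have hfp' : ‖f - p‖ < ε / 4 := by rwa [← dist_eq_norm]
  have hpN := hN T (le_of_max_le_left hTN)
  rw [dist_zero_right] at hpN ⊢
  calc ‖orbitAverage a f x T - orbitAverage a f y T‖
      = ‖orbitAverage a (f - p) x T - orbitAverage a (f - p) y T
          + (orbitAverage a p x T - orbitAverage a p y T)‖ := by
        rw [orbitAverage_sub, orbitAverage_sub]; ring_nf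
    _ ≤ ‖f - p‖ + ‖f - p‖ + ‖orbitAverage a p x T - orbitAverage a p y T‖ := by
        grw [norm_add_le, norm_sub_le, norm_orbitAverage_le a _ x _ hT,
          norm_orbitAverage_le a _ y _ hT]
    _ < ε := by linarith

theorem denseRange_linearFlow (ha : LinearIndependent ℤ a) :
    DenseRange (linearFlow a) := by
  intro x₀
  by_contra hx₀
  set O := range (linearFlow a)
  have hr : 0 < infDist x₀ O := (infDist_pos_iff_notMem_closure (range_nonempty _)).1 hx₀
  have hO : ∀ t, (· + linearFlow a t) '' O = O := fun t => by
    rw [← range_comp]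
    simpa only [Function.comp_def, ← linearFlow_add] using
      (add_right_surjective t).range_comp (linearFlow a)
  have hinv : ∀ x t, infDist (x + linearFlow a t) O = infDist x O := fun x t => by
    conv_lhs => rw [← hO t]
    exact infDist_image (isometry_add_right _)
  let F : C(UnitAddTorus d, ℂ) := ⟨fun x => (infDist x O : ℂ), by fun_prop⟩
  have hF : ∀ x {T : ℝ}, 0 < T → orbitAverage a F x T = infDist x O := fun x T hT => by
    simp [orbitAverage, F, hinv, hT.ne']
  have h0 : infDist 0 O = 0 := infDist_zero_of_mem ⟨0, funext fun _ => by simp [linearFlow]⟩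
  have hlim : Tendsto (fun T => orbitAverage a F x₀ T - orbitAverage a F 0 T) atTop
      (𝓝 (infDist x₀ O : ℂ)) :=
    tendsto_const_nhds.congr' <| (eventually_gt_atTop 0).mono fun T hT => by
      simp [hF x₀ hT, hF 0 hT, h0]
  exact hr.ne' (by exact_mod_cast tendsto_nhds_unique hlim (tendsto_orbitAverage_sub ha F x₀ 0))

end UnitAddTorus

noncomputable def cayley (z : ℂ) : ℂ := (z + 1) / (z - 1)

lemma cayley_cayley {z : ℂ} (hz : z ≠ 1) : cayley (cayley z) = z := by
  have hz' : z - 1 ≠ 0 := sub_ne_zero.2 hz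
  unfold cayley
  rw [div_add_one hz', div_sub_one hz']
  field_simp
  ring

lemma norm_cayley_lt_one_iff {z : ℂ} (hz : z ≠ 1) : ‖cayley z‖ < 1 ↔ z.re < 0 := by
  have hz' : 0 < ‖z - 1‖ := norm_pos_iff.2 (sub_ne_zero.2 hz)
  rw [cayley, norm_div, div_lt_one hz', ← sq_lt_sq₀ (norm_nonneg _) hz'.le,
    ← normSq_eq_norm_sq, ← normSq_eq_norm_sq]
  simp only [normSq_apply, add_re, add_im, sub_re, sub_im, one_re, one_im]
  constructor <;> intro h <;> nlinarith

lemma cayley_ne_one (z : ℂ) : cayley z ≠ 1 := by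
  intro h
  rcases eq_or_ne z 1 with rfl | hz
  · norm_num [cayley] at h
  · rw [cayley, div_eq_one_iff_eq (sub_ne_zero.2 hz)] at h
    have h2 : (2 : ℂ) = 0 := by linear_combination h
    norm_num at h2

lemma re_cayley_neg {w : ℂ} (hw : ‖w‖ < 1) : (cayley w).re < 0 := by
  have hw1 : w ≠ 1 := by rintro rfl; simp at hw
  rw [← norm_cayley_lt_one_iff (cayley_ne_one w), cayley_cayley hw1]
  exact hw

lemma differentiableOn_cayley : DifferentiableOn ℂ cayley {1}ᶜ :=
  (differentiableOn_id.add_const 1).div (differentiableOn_id.sub_const 1)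
    fun _ hz => sub_ne_zero.2 hz

noncomputable def halfSumExp (a b : ℝ) (z : ℂ) : ℂ := 1 / 2 * (exp (a * z) + exp (b * z))

lemma differentiable_halfSumExp (a b : ℝ) : Differentiable ℂ (halfSumExp a b) := by
  unfold halfSumExp; fun_prop

lemma norm_halfSumExp_lt_one {a b : ℝ} (ha : 0 < a) (hb : 0 < b) {z : ℂ} (hz : z.re < 0) :
    ‖halfSumExp a b z‖ < 1 := by
  have h : ∀ {c : ℝ}, 0 < c → ‖exp (c * z)‖ < 1 := fun hc => by
    rw [norm_exp, re_ofReal_mul, Real.exp_lt_one_iff]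
    exact mul_neg_of_pos_of_neg hc hz
  calc ‖halfSumExp a b z‖ ≤ 1 / 2 * (‖exp (a * z)‖ + ‖exp (b * z)‖) := by
        rw [halfSumExp, norm_mul]; norm_num; exact norm_add_le _ _
    _ < 1 := by linarith [h ha, h hb]

lemma exists_eq_half_mul_add_circle {u : ℂ} (hu : ‖u‖ ≤ 1) :
    ∃ ζ ξ : Circle, u = 1 / 2 * (ζ + ξ) := by
  set θ := Real.arccos ‖u‖
  refine ⟨Circle.exp (arg u + θ), Circle.exp (arg u - θ), ?_⟩
  have hcos : Real.cos θ = ‖u‖ := Real.cos_arccos (by linarith [norm_nonneg u]) hu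
  conv_lhs => rw [← norm_mul_exp_arg_mul_I u, ← hcos]
  simp only [Circle.coe_exp]
  push_cast
  rw [show (arg u - θ : ℂ) * I = arg u * I + -θ * I by ring, add_mul, exp_add, exp_add,
    ← mul_add, ← two_cos]
  ring

lemma AddCircle.toCircle_surjective {T : ℝ} (hT : T ≠ 0) :
    Function.Surjective (AddCircle.toCircle : AddCircle T → Circle) := fun z =>
  ⟨(AddCircle.homeomorphCircle hT).symm z, by
    rw [← AddCircle.homeomorphCircle_apply hT, Homeomorph.apply_symm_apply]⟩

theorem closedBidisk_subset_closure_image_halfSumExp {a : Fin 4 → ℝ}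
    (ha : LinearIndependent ℤ a) :
    {v : ℂ × ℂ | ‖v.1‖ ≤ 1 ∧ ‖v.2‖ ≤ 1} ⊆ closure
      ((fun z => (halfSumExp (a 0) (a 1) z, halfSumExp (a 2) (a 3) z)) '' {z | z.re < 0}) := by
  set M := fun z => (halfSumExp (a 0) (a 1) z, halfSumExp (a 2) (a 3) z)
  let Φ : UnitAddTorus (Fin 4) → ℂ × ℂ := fun x =>
    (1 / 2 * (AddCircle.toCircle (x 0) + AddCircle.toCircle (x 1)),
      1 / 2 * (AddCircle.toCircle (x 2) + AddCircle.toCircle (x 3)))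
  have hΦM : ∀ t, Φ (UnitAddTorus.linearFlow a t) = M (2 * π * t * I) := fun t => by
    simp only [Φ, M, halfSumExp, UnitAddTorus.linearFlow, AddCircle.toCircle_apply_mk,
      Circle.coe_exp]
    push_cast
    ring_nf
  have hrange : {v : ℂ × ℂ | ‖v.1‖ ≤ 1 ∧ ‖v.2‖ ≤ 1} ⊆ range Φ := by
    rintro ⟨v₁, v₂⟩ ⟨hv₁, hv₂⟩
    obtain ⟨ζ₁, ξ₁, rfl⟩ := exists_eq_half_mul_add_circle hv₁
    obtain ⟨ζ₂, ξ₂, rfl⟩ := exists_eq_half_mul_add_circle hv₂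
    choose x hx using fun i =>
      AddCircle.toCircle_surjective (T := 1) one_ne_zero (![ζ₁, ξ₁, ζ₂, ξ₂] i)
    exact ⟨x, by simp [Φ, hx]⟩
  calc {v : ℂ × ℂ | ‖v.1‖ ≤ 1 ∧ ‖v.2‖ ≤ 1}
      ⊆ Φ '' closure (range (UnitAddTorus.linearFlow a)) := by
        rwa [(UnitAddTorus.denseRange_linearFlow ha).closure_range, image_univ]
    _ ⊆ closure (Φ '' range (UnitAddTorus.linearFlow a)) :=
        image_closure_subset_closure_image (by fun_prop)
    _ ⊆ closure (M '' {z | z.re < 0}) := by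
        refine closure_minimal ?_ isClosed_closure
        rintro _ ⟨_, ⟨t, rfl⟩, rfl⟩
        rw [hΦM]
        refine image_closure_subset_closure_image (by unfold M halfSumExp; fun_prop) ⟨_, ?_, rfl⟩
        simp

/-- The explicit map `g(w) = (½(e^{(w+1)/(w-1)} + e^{√2(w+1)/(w-1)}),
½(e^{√3(w+1)/(w-1)} + e^{√5(w+1)/(w-1)}))` is holomorphic on the unit disk `Δ`, takes
values in the bidisk `Δ²`, and has dense image in `Δ²`. -/
theorem explicit_dense_map_disk_to_bidisk (g : ℂ → ℂ × ℂ)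
    (hg : ∀ w : ℂ, g w =
      ((1 / 2) * (Complex.exp ((w + 1) / (w - 1)) +
          Complex.exp ((Real.sqrt 2 : ℂ) * ((w + 1) / (w - 1)))),
       (1 / 2) * (Complex.exp ((Real.sqrt 3 : ℂ) * ((w + 1) / (w - 1))) +
          Complex.exp ((Real.sqrt 5 : ℂ) * ((w + 1) / (w - 1)))))) :
    DifferentiableOn ℂ g (Metric.ball (0 : ℂ) 1) ∧
    (∀ w ∈ Metric.ball (0 : ℂ) 1, ‖(g w).1‖ < 1 ∧ ‖(g w).2‖ < 1) ∧
    {v : ℂ × ℂ | ‖v.1‖ < 1 ∧ ‖v.2‖ < 1} ⊆ closure (g '' Metric.ball (0 : ℂ) 1) := by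
  set M : ℂ → ℂ × ℂ := fun z => (halfSumExp 1 √2 z, halfSumExp √3 √5 z)
  have hgM : g = M ∘ cayley := funext fun w => by simp [hg, M, halfSumExp, cayley]
  have hball : ∀ w ∈ ball (0 : ℂ) 1, ‖w‖ < 1 := fun w hw => by simpa using hw
  refine ⟨?_, fun w hw => ?_, fun v hv => ?_⟩
  · rw [hgM]
    refine ((differentiable_halfSumExp _ _).prodMk
      (differentiable_halfSumExp _ _)).comp_differentiableOn (differentiableOn_cayley.mono ?_)
    rintro w hw rfl
    simpa using hball 1 hw
  · have hre := re_cayley_neg (hball w hw)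
    rw [hgM]
    exact ⟨norm_halfSumExp_lt_one one_pos (by positivity) hre,
      norm_halfSumExp_lt_one (by positivity) (by positivity) hre⟩
  · refine closure_mono ?_ (closedBidisk_subset_closure_image_halfSumExp
      linearIndependent_one_sqrt_two_sqrt_three_sqrt_five ⟨hv.1.le, hv.2.le⟩)
    rintro _ ⟨z, hz, rfl⟩
    have hz1 : z ≠ 1 := by rintro rfl; norm_num at hz
    refine ⟨cayley z, by simpa using (norm_cayley_lt_one_iff hz1).2 hz, ?_⟩
    simp [hgM, M, cayley_cayley hz1]
end

section
/- Let n ≥ 1 and let λ₁, …, λ_{2n} be positive real numbers that are linearly independent over ℚ. Define φ on the upper half plane H⁺ = {z ∈ ℂ : Im z > 0} by φ(z) = ( (1/2)(e^{iλ₁z} + e^{iλ₂z}), (1/2)(e^{iλ₃z} + e^{iλ₄z}), …, (1/2)(e^{iλ_{2n-1}z} + e^{iλ_{2n}z}) ) ∈ ℂⁿ. Then φ is holomorphic on H⁺, φ(H⁺) is contained in the polydisk Δⁿ = {v ∈ ℂⁿ : |v_k| < 1 for all k}, and φ(H⁺) is dense in Δⁿ. -/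
/-!
The heart is Kronecker's theorem: for `ℤ`-independent `λ`, the curve `x ↦ (e^{iλⱼx})ⱼ` is dense
in the torus. We follow Bohr. The kernel `ψ_N(x) = ∏ⱼ cos²ᴺ((λⱼx - βⱼ)/2)` is a trigonometric
polynomial whose frequencies `∑ⱼ (pⱼ - N) λⱼ` vanish only at `p = (N, …, N)`, so its constant
coefficient, which is at least `(2N)⁻ᵐ`, is bounded by `sup |ψ_N|` (average over `[0, T]` and let
`T → ∞`). If the curve stayed `ε`-away from `(e^{iβⱼ})`, that supremum would be at most `ρᴺ` with
`ρ < 1`, which is absurd for large `N`.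

Every point of the closed unit disk is the midpoint of two points of the unit circle, so `φ`
restricted to `ℝ` has dense image in the closed polydisk; and `φ x = lim φ (x + iy)` as `y → 0⁺`.
-/

open Complex Finset

theorem norm_integral_exp_ofReal_mul_I_le {θ : ℝ} (hθ : θ ≠ 0) (T : ℝ) :
    ‖∫ x in (0 : ℝ)..T, exp (↑(θ * x) * I)‖ ≤ 2 / |θ| := by
  have hθI : (θ : ℂ) * I ≠ 0 := mul_ne_zero (ofReal_ne_zero.mpr hθ) I_ne_zero
  have hexp : ∀ t : ℝ, exp (θ * I * t) = exp (↑(θ * t) * I) := fun t => by push_cast; ring_nf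
  simp_rw [← hexp, integral_exp_mul_complex hθI, norm_div, norm_mul, norm_I, norm_real,
    Real.norm_eq_abs, mul_one]
  gcongr
  calc ‖exp (θ * I * T) - exp (θ * I * (0 : ℝ))‖
      ≤ ‖exp (θ * I * T)‖ + ‖exp (θ * I * (0 : ℝ))‖ := norm_sub_le _ _
    _ = 2 := by rw [hexp, hexp, norm_exp_ofReal_mul_I, norm_exp_ofReal_mul_I]; norm_num

theorem norm_le_of_forall_norm_add_sum_exp_le {α : Type*} {S : Finset α} {c : ℂ} {a : α → ℂ}
    {θ : α → ℝ} (hθ : ∀ p ∈ S, θ p ≠ 0) {M : ℝ}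
    (hM : ∀ x : ℝ, ‖c + ∑ p ∈ S, a p * exp (↑(θ p * x) * I)‖ ≤ M) : ‖c‖ ≤ M := by
  set K := ∑ p ∈ S, ‖a p‖ * (2 / |θ p|)
  have hK : 0 ≤ K := sum_nonneg fun p _ => by positivity
  have hcont : ∀ p, Continuous fun x : ℝ => a p * exp (↑(θ p * x) * I) := fun p => by fun_prop
  have hbound : ∀ T > 0, ‖c‖ * T ≤ M * T + K := by
    intro T hT
    have hint : ∫ x in (0 : ℝ)..T, (c + ∑ p ∈ S, a p * exp (↑(θ p * x) * I))
        = c * T + ∑ p ∈ S, a p * ∫ x in (0 : ℝ)..T, exp (↑(θ p * x) * I) := by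
      rw [intervalIntegral.integral_add intervalIntegrable_const
        ((continuous_finsetSum _ fun p _ => hcont p).intervalIntegrable 0 T),
        intervalIntegral.integral_finsetSum fun p _ => (hcont p).intervalIntegrable _ _]
      simp [intervalIntegral.integral_const_mul, mul_comm]
    have hmean : ‖∫ x in (0 : ℝ)..T, (c + ∑ p ∈ S, a p * exp (↑(θ p * x) * I))‖ ≤ M * T := by
      simpa [abs_of_pos hT] using intervalIntegral.norm_integral_le_of_norm_le_const
        (a := 0) (b := T) fun x _ => hM x
    have hosc : ‖∑ p ∈ S, a p * ∫ x in (0 : ℝ)..T, exp (↑(θ p * x) * I)‖ ≤ K := by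
      refine (norm_sum_le _ _).trans (sum_le_sum fun p hp => ?_)
      rw [norm_mul]
      gcongr
      exact norm_integral_exp_ofReal_mul_I_le (hθ p hp) T
    calc ‖c‖ * T = ‖c * T‖ := by rw [norm_mul, norm_real, Real.norm_of_nonneg hT.le]
      _ ≤ _ := by rw [eq_sub_of_add_eq hint.symm]; exact norm_sub_le _ _
      _ ≤ M * T + K := add_le_add hmean hosc
  by_contra! hlt
  have hgap : 0 < ‖c‖ - M := sub_pos.mpr hlt
  have := hbound ((K + 1) / (‖c‖ - M)) (by positivity)
  rw [← sub_le_iff_le_add', ← sub_mul, mul_div_cancel₀ _ hgap.ne'] at this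
  linarith

theorem norm_apply_le_of_forall_norm_sum_exp_le {α : Type*} [DecidableEq α] {S : Finset α}
    {a : α → ℂ} {θ : α → ℝ} {p₀ : α} (hp₀ : p₀ ∈ S) (hθ₀ : θ p₀ = 0)
    (hθ : ∀ p ∈ S, p ≠ p₀ → θ p ≠ 0) {M : ℝ}
    (hM : ∀ x : ℝ, ‖∑ p ∈ S, a p * exp (↑(θ p * x) * I)‖ ≤ M) : ‖a p₀‖ ≤ M :=
  norm_le_of_forall_norm_add_sum_exp_le (S := S.erase p₀) (θ := θ)
    (fun p hp => hθ p (mem_of_mem_erase hp) (ne_of_mem_erase hp)) fun x => by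
      simpa [← add_sum_erase S _ hp₀, hθ₀] using hM x

theorem cos_half_pow_eq_sum (u : ℝ) (N : ℕ) :
    (Real.cos (u / 2) : ℂ) ^ (2 * N) = ∑ j ∈ range (2 * N + 1),
      ((2 * N).choose j / 4 ^ N : ℂ) * exp (↑(((j : ℝ) - N) * u) * I) := by
  rw [ofReal_cos, cos, div_pow, add_pow, sum_div]
  refine sum_congr rfl fun j hj => ?_
  have hj : j ≤ 2 * N := Nat.lt_succ_iff.mp (mem_range.mp hj)
  rw [← exp_nat_mul, ← exp_nat_mul, ← exp_add, pow_mul]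
  push_cast [hj]
  ring_nf

theorem prod_cos_half_pow_eq_sum {ι : Type*} [Fintype ι] [DecidableEq ι] (lam β : ι → ℝ)
    (N : ℕ) (x : ℝ) :
    ∏ i, (Real.cos ((lam i * x - β i) / 2) : ℂ) ^ (2 * N) =
      ∑ p ∈ Fintype.piFinset fun _ => range (2 * N + 1),
        (∏ i, ((2 * N).choose (p i) / 4 ^ N : ℂ) * exp (-↑(((p i : ℝ) - N) * β i) * I)) *
          exp (↑((∑ i, ((p i : ℝ) - N) * lam i) * x) * I) := by
  simp_rw [cos_half_pow_eq_sum, prod_univ_sum]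
  refine sum_congr rfl fun p _ => ?_
  rw [sum_mul, ofReal_sum, sum_mul, exp_sum, ← prod_mul_distrib]
  refine prod_congr rfl fun i _ => ?_
  rw [mul_assoc, ← exp_add]
  push_cast
  ring_nf

theorem norm_prod_cos_pow_le {ι : Type*} [Fintype ι] (u : ι → ℝ) (N : ℕ) {r : ℝ}
    (hr : ∃ i, Real.cos (u i) ^ 2 ≤ r) : ‖∏ i, (Real.cos (u i) : ℂ) ^ (2 * N)‖ ≤ r ^ N := by
  obtain ⟨i₀, hi₀⟩ := hr
  simp_rw [← ofReal_pow, ← ofReal_prod, pow_mul]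
  rw [norm_real, Real.norm_of_nonneg (by positivity)]
  calc ∏ i, (Real.cos (u i) ^ 2) ^ N ≤ ∏ i ∈ {i₀}, (Real.cos (u i) ^ 2) ^ N :=
        prod_le_prod_of_subset_of_le_one (subset_univ _) (fun i _ => by positivity)
          fun i _ _ => pow_le_one₀ (sq_nonneg _) (Real.cos_sq_le_one _)
    _ ≤ r ^ N := by
        rw [prod_singleton]
        exact pow_le_pow_left₀ (sq_nonneg _) hi₀ N

theorem sum_sub_mul_ne_zero {ι : Type*} [Fintype ι] {lam : ι → ℝ}
    (hlam : LinearIndependent ℤ lam) (N : ℕ) {p : ι → ℕ} (hp : p ≠ fun _ => N) :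
    ∑ i, ((p i : ℝ) - N) * lam i ≠ 0 := by
  intro hθ
  refine hp (funext fun i => ?_)
  have := Fintype.linearIndependent_iff.mp hlam (fun i => (p i : ℤ) - N)
    (by simpa only [zsmul_eq_mul, Int.cast_sub, Int.cast_natCast] using hθ) i
  omega

theorem exists_forall_lt_cos_sq {ι : Type*} [Fintype ι] {lam : ι → ℝ}
    (hlam : LinearIndependent ℤ lam) (β : ι → ℝ) {ρ : ℝ} (hρ : ρ < 1) :
    ∃ x : ℝ, ∀ i, ρ < Real.cos ((lam i * x - β i) / 2) ^ 2 := by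
  classical
  by_contra! hfar
  set r := max ρ 0
  set m := Fintype.card ι
  obtain ⟨N, hN, hNr⟩ : ∃ N : ℕ, 0 < N ∧ (2 * N : ℝ) ^ m * r ^ N < 1 := by
    have hlim := (tendsto_pow_const_mul_const_pow_of_lt_one m (le_max_right ρ 0)
      (max_lt hρ one_pos)).const_mul ((2 : ℝ) ^ m)
    rw [mul_zero] at hlim
    obtain ⟨N, hN1, hN⟩ := ((hlim.eventually (gt_mem_nhds one_pos)).and
      (Filter.eventually_gt_atTop 0)).exists
    exact ⟨N, hN, by rwa [mul_pow, mul_assoc]⟩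
  set a : ℝ := (2 * N).choose N / 4 ^ N
  have ha : 1 ≤ 2 * N * a := by
    have := Nat.four_pow_le_two_mul_self_mul_centralBinom N hN
    rw [Nat.centralBinom_eq_two_mul_choose] at this
    rw [mul_div_assoc', le_div_iff₀ (by positivity), one_mul]
    exact_mod_cast this
  have hcoef : a ^ m ≤ r ^ N := by
    have := norm_apply_le_of_forall_norm_sum_exp_le
      (S := Fintype.piFinset fun _ => range (2 * N + 1)) (p₀ := fun _ => N)
      (θ := fun p => ∑ i, ((p i : ℝ) - N) * lam i)
      (Fintype.mem_piFinset.2 fun _ => mem_range.2 (by omega)) (by simp)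
      (fun p _ hp => sum_sub_mul_ne_zero hlam N hp) fun x => by
        rw [← prod_cos_half_pow_eq_sum]
        exact norm_prod_cos_pow_le _ N ((hfar x).imp fun i hi => hi.trans (le_max_left ρ 0))
    simpa [a, m, r, div_pow] using this
  have : (1 : ℝ) ≤ (2 * N) ^ m * r ^ N := calc
    (1 : ℝ) ≤ (2 * N * a) ^ m := one_le_pow₀ ha
    _ = (2 * N) ^ m * a ^ m := mul_pow _ _ _
    _ ≤ (2 * N) ^ m * r ^ N := by gcongr
  exact this.not_gt hNr

theorem Circle.dist_exp_exp (a b : ℝ) :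
    dist (Circle.exp a) (Circle.exp b) = 2 * |Real.sin ((a - b) / 2)| := by
  have h : (Circle.exp a : ℂ) - Circle.exp b =
      Circle.exp b * (Complex.exp (I * ↑(a - b)) - 1) := by
    rw [Circle.coe_exp, Circle.coe_exp, mul_sub, ← Complex.exp_add]
    push_cast
    ring_nf
  rw [show dist (Circle.exp a) (Circle.exp b) = dist (Circle.exp a : ℂ) (Circle.exp b) from rfl,
    dist_eq_norm, h, norm_mul, Circle.norm_coe, one_mul, norm_exp_I_mul_ofReal_sub_one,
    norm_mul, Real.norm_two, Real.norm_eq_abs]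

theorem denseRange_circleExp_mul {ι : Type*} [Fintype ι] {lam : ι → ℝ}
    (hlam : LinearIndependent ℤ lam) :
    DenseRange fun (x : ℝ) (i : ι) => Circle.exp (lam i * x) := by
  refine Metric.denseRange_iff.2 fun w ε hε => ?_
  obtain ⟨x, hx⟩ := exists_forall_lt_cos_sq hlam (fun i => (w i : ℂ).arg) (ρ := 1 - ε ^ 2 / 4)
    (by nlinarith)
  refine ⟨x, (dist_pi_lt_iff hε).2 fun i => ?_⟩
  rw [dist_comm, ← Circle.exp_arg (w i), Circle.dist_exp_exp]
  have hsin : Real.sin ((lam i * x - (w i : ℂ).arg) / 2) ^ 2 < (ε / 2) ^ 2 := by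
    rw [Real.sin_sq]
    linarith [hx i]
  linarith [abs_lt_of_sq_lt_sq hsin (by positivity)]

theorem exists_circle_midpoint_eq {u : ℂ} (hu : ‖u‖ ≤ 1) :
    ∃ a b : Circle, midpoint ℝ (a : ℂ) b = u := by
  refine ⟨Circle.exp (u.arg + Real.arccos ‖u‖), Circle.exp (u.arg - Real.arccos ‖u‖), ?_⟩
  have hcos : Real.cos (Real.arccos ‖u‖) = ‖u‖ := Real.cos_arccos (by linarith [norm_nonneg u]) hu
  rw [midpoint_eq_smul_add, invOf_eq_inv, real_smul, Circle.coe_exp, Circle.coe_exp]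
  conv_rhs => rw [← norm_mul_exp_arg_mul_I u, ← hcos, ofReal_cos, cos]
  push_cast
  rw [add_mul, sub_mul, exp_add, exp_sub, neg_mul, exp_neg]
  ring

theorem exists_fin_two_mul_interleave {α : Type*} {n : ℕ} (a b : Fin n → α) :
    ∃ w : Fin (2 * n) → α, ∀ k : Fin n,
      w ⟨2 * k, by omega⟩ = a k ∧ w ⟨2 * k + 1, by omega⟩ = b k :=
  ⟨fun j => if j.1 % 2 = 0 then a ⟨j / 2, by omega⟩ else b ⟨j / 2, by omega⟩,
    fun k => ⟨by simp, by simp [Nat.mul_add_div]⟩⟩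

theorem closedPolydisk_subset_closure_range_midpoint {n : ℕ} {lam : Fin (2 * n) → ℝ}
    (hlam : LinearIndependent ℤ lam) :
    {v : Fin n → ℂ | ∀ k, ‖v k‖ ≤ 1} ⊆ closure (Set.range fun (x : ℝ) (k : Fin n) =>
      midpoint ℝ (Circle.exp (lam ⟨2 * k, by omega⟩ * x) : ℂ)
        (Circle.exp (lam ⟨2 * k + 1, by omega⟩ * x))) := by
  intro v hv
  choose a b hab using fun k => exists_circle_midpoint_eq (hv k)
  obtain ⟨w, hw⟩ := exists_fin_two_mul_interleave a b
  refine Metric.mem_closure_range_iff.2 fun ε hε => ?_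
  obtain ⟨x, hx⟩ := Metric.denseRange_iff.1 (denseRange_circleExp_mul hlam) w ε hε
  have hxj : ∀ j, dist (w j : ℂ) (Circle.exp (lam j * x)) < ε := (dist_pi_lt_iff hε).1 hx
  refine ⟨x, (dist_pi_lt_iff hε).2 fun k => ?_⟩
  rw [← hab k, ← (hw k).1, ← (hw k).2]
  calc _ ≤ _ := dist_midpoint_midpoint_le _ _ _ _
    _ < ε := by linarith [hxj ⟨2 * k, by omega⟩, hxj ⟨2 * k + 1, by omega⟩]

theorem norm_exp_I_mul_ofReal_mul_lt_one {l : ℝ} (hl : 0 < l) {z : ℂ} (hz : 0 < z.im) :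
    ‖exp (I * l * z)‖ < 1 := by
  rw [norm_exp, Real.exp_lt_one_iff]
  simpa [mul_re, mul_im] using mul_pos hl hz

theorem norm_half_mul_add_lt_one {u v : ℂ} (hu : ‖u‖ < 1) (hv : ‖v‖ < 1) :
    ‖(1 / 2) * (u + v)‖ < 1 := by
  rw [norm_mul, one_div, norm_inv, Complex.norm_two]
  linarith [norm_add_le u v]

/-- Let `λ₁,…,λ_{2n}` be positive reals, linearly independent over `ℚ`. Then
`φ(z) = (½(e^{iλ₁z}+e^{iλ₂z}),…,½(e^{iλ_{2n-1}z}+e^{iλ_{2n}z}))` is holomorphic on the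
upper half plane `H⁺`, maps `H⁺` into the polydisk `Δⁿ`, and has dense image in `Δⁿ`. -/
theorem dense_map_halfplane_to_polydisk {n : ℕ}
    (lam : Fin (2 * n) → ℝ) (hpos : ∀ i, 0 < lam i) (hli : LinearIndependent ℚ lam)
    (φ : ℂ → Fin n → ℂ)
    (hφ : ∀ (z : ℂ) (k : Fin n), φ z k =
      (1 / 2) * (Complex.exp (Complex.I * ((lam ⟨2 * k.1, by have := k.2; omega⟩ : ℝ) : ℂ) * z) +
        Complex.exp (Complex.I * ((lam ⟨2 * k.1 + 1, by have := k.2; omega⟩ : ℝ) : ℂ) * z))) :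
    DifferentiableOn ℂ φ {z : ℂ | 0 < z.im} ∧
    (∀ z : ℂ, 0 < z.im → ∀ k : Fin n, ‖φ z k‖ < 1) ∧
    {v : Fin n → ℂ | ∀ k, ‖v k‖ < 1} ⊆ closure (φ '' {z : ℂ | 0 < z.im}) := by
  have hdiff : Differentiable ℂ φ := by
    rw [show φ = _ from funext fun z => funext (hφ z)]
    fun_prop
  refine ⟨hdiff.differentiableOn, fun z hz k => ?_, fun v hv => ?_⟩
  · rw [hφ]
    exact norm_half_mul_add_lt_one (norm_exp_I_mul_ofReal_mul_lt_one (hpos _) hz)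
      (norm_exp_I_mul_ofReal_mul_lt_one (hpos _) hz)
  have hreal : Set.range (fun x : ℝ => φ x) ⊆ closure (φ '' {z : ℂ | 0 < z.im}) := by
    rintro _ ⟨x, rfl⟩
    refine image_closure_subset_closure_image hdiff.continuous ⟨x, ?_, rfl⟩
    simp
  refine closure_minimal hreal isClosed_closure ?_
  convert closedPolydisk_subset_closure_range_midpoint (hli.restrict_scalars' ℤ)
    (fun k => (hv k).le) using 4 with x
  funext k
  rw [hφ, midpoint_eq_smul_add, invOf_eq_inv, real_smul, Circle.coe_exp, Circle.coe_exp]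
  push_cast
  ring_nf
end

section
/- Let p ∈ ℂ and r, ε > 0 with |p| > r, let d ∈ ℕ, and let a₀, a₁, …, a_d ∈ ℂ. Then there exists a polynomial P ∈ ℂ[X] such that |P(z)| < ε for all z ∈ ℂ with |z| ≤ r, and the k-th derivative of P at p equals a_k for every k = 0, 1, …, d. -/
open Polynomial Finset

private lemma iteratedDeriv_polynomial_eval (P : Polynomial ℂ) (k : ℕ) (x : ℂ) :
    iteratedDeriv k (fun z => P.eval z) x = (derivative^[k] P).eval x := by
  induction k generalizing P x with
  | zero => simp
  | succ n ih =>
    rw [iteratedDeriv_succ']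
    have h : deriv (fun y : ℂ => P.eval y) = fun z => (derivative P).eval z :=
      funext fun z => Polynomial.deriv P
    rw [h, ih, Function.iterate_succ_apply]

/-- Let `p ∈ ℂ`, `|p| > r > 0`, `ε > 0`, `d ∈ ℕ` and `a₀,…,a_d ∈ ℂ`. Then there is a
polynomial `P ∈ ℂ[X]` with `|P(z)| < ε` for `|z| ≤ r` whose derivatives at `p` up to
order `d` take the prescribed values `a₀,…,a_d`. -/
theorem exists_small_polynomial_with_prescribed_jet (p : ℂ) (r ε : ℝ) (hr : 0 < r)
    (hpr : r < ‖p‖) (hε : 0 < ε) (d : ℕ) (a : ℕ → ℂ) :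
    ∃ P : Polynomial ℂ, (∀ z : ℂ, ‖z‖ ≤ r → ‖P.eval z‖ < ε) ∧
      ∀ k ≤ d, iteratedDeriv k (fun z => P.eval z) p = a k := by
  have hp0 : p ≠ 0 := by
    intro h; rw [h] at hpr; simp at hpr; linarith
  have hpnorm : (0:ℝ) < ‖p‖ := lt_trans hr hpr
  -- The Taylor jet polynomial
  set Q : Polynomial ℂ := ∑ i ∈ range (d + 1), C (a i / i.factorial) * (X + C (-p)) ^ i with hQ
  -- bound for Q on the disk
  set M : ℝ := (∑ i ∈ range (d + 1), ‖a i / (i.factorial : ℂ)‖ * (r + ‖p‖) ^ i) + 1 with hM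
  have hMpos : 0 < M := by
    have : (0:ℝ) ≤ ∑ i ∈ range (d + 1), ‖a i / (i.factorial : ℂ)‖ * (r + ‖p‖) ^ i := by
      apply Finset.sum_nonneg
      intro i _
      exact mul_nonneg (norm_nonneg _) (pow_nonneg (by positivity) _)
    rw [hM]; linarith
  have hQbound : ∀ z : ℂ, ‖z‖ ≤ r → ‖Q.eval z‖ ≤ M := by
    intro z hz
    rw [hQ]
    simp only [eval_finset_sum, eval_mul, eval_C, eval_pow, eval_add, eval_neg, eval_X]
    calc ‖∑ i ∈ range (d + 1), a i / (i.factorial : ℂ) * (z + -p) ^ i‖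
        ≤ ∑ i ∈ range (d + 1), ‖a i / (i.factorial : ℂ) * (z + -p) ^ i‖ :=
          norm_sum_le _ _
      _ ≤ ∑ i ∈ range (d + 1), ‖a i / (i.factorial : ℂ)‖ * (r + ‖p‖) ^ i := by
          apply Finset.sum_le_sum
          intro i _
          rw [norm_mul, norm_pow]
          apply mul_le_mul_of_nonneg_left _ (norm_nonneg _)
          apply pow_le_pow_left₀ (norm_nonneg _)
          calc ‖z + -p‖ ≤ ‖z‖ + ‖p‖ := by simpa using norm_add_le z (-p)
            _ ≤ r + ‖p‖ := by linarith
      _ ≤ M := by rw [hM]; linarith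
  -- choose m
  have hratio : r / ‖p‖ < 1 := (div_lt_one hpnorm).mpr hpr
  have hratio0 : 0 < r / ‖p‖ := div_pos hr hpnorm
  set ε' : ℝ := min 1 (ε / (M * (d + 1) * 2 ^ d)) with hε'
  have hε'pos : 0 < ε' := by
    apply lt_min one_pos
    exact div_pos hε (mul_pos (mul_pos hMpos (by positivity)) (by positivity))
  obtain ⟨m, hm⟩ := exists_pow_lt_of_lt_one hε'pos hratio
  set δ : ℝ := (r / ‖p‖) ^ m with hδ
  have hδ0 : 0 ≤ δ := pow_nonneg (le_of_lt hratio0) m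
  have hδ1 : δ ≤ 1 := le_of_lt (lt_of_lt_of_le hm (min_le_left _ _))
  have hδε : δ < ε / (M * (d + 1) * 2 ^ d) := lt_of_lt_of_le hm (min_le_right _ _)
  -- the polynomials
  set T : Polynomial ℂ := (X * C p⁻¹) ^ m with hT
  set S : Polynomial ℂ := ∑ j ∈ range (d + 1), (1 - T) ^ j with hS
  refine ⟨Q * (T * S), ?_, ?_⟩
  · -- smallness
    intro z hz
    have hTz : ‖T.eval z‖ ≤ δ := by
      rw [hT]
      simp only [eval_pow, eval_mul, eval_X, eval_C]
      rw [norm_pow, norm_mul, norm_inv, hδ]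
      have hle : ‖z‖ * ‖p‖⁻¹ ≤ r / ‖p‖ := by
        rw [div_eq_mul_inv]
        exact mul_le_mul_of_nonneg_right hz (by positivity)
      exact pow_le_pow_left₀ (by positivity) hle m
    have h1Tz : ‖(1 - T).eval z‖ ≤ 2 := by
      simp only [eval_sub, eval_one]
      calc ‖1 - T.eval z‖ ≤ ‖(1:ℂ)‖ + ‖T.eval z‖ := norm_sub_le _ _
        _ ≤ 1 + δ := by rw [norm_one]; linarith
        _ ≤ 2 := by linarith
    have hSz : ‖S.eval z‖ ≤ (d + 1) * 2 ^ d := by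
      rw [hS]
      simp only [eval_finset_sum, eval_pow]
      calc ‖∑ j ∈ range (d + 1), (1 - T).eval z ^ j‖
          ≤ ∑ j ∈ range (d + 1), ‖(1 - T).eval z ^ j‖ := norm_sum_le _ _
        _ ≤ ∑ _j ∈ range (d + 1), (2:ℝ) ^ d := by
            apply Finset.sum_le_sum
            intro j hj
            rw [norm_pow]
            calc ‖(1 - T).eval z‖ ^ j ≤ 2 ^ j :=
                  pow_le_pow_left₀ (norm_nonneg _) h1Tz j
              _ ≤ 2 ^ d := by
                  apply pow_le_pow_right₀ (by norm_num)
                  exact Nat.lt_succ_iff.mp (Finset.mem_range.mp hj)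
        _ = (d + 1) * 2 ^ d := by
            rw [Finset.sum_const, Finset.card_range]
            push_cast; ring
    rw [eval_mul, eval_mul, norm_mul, norm_mul]
    calc ‖Q.eval z‖ * (‖T.eval z‖ * ‖S.eval z‖)
        ≤ M * (δ * ((d + 1) * 2 ^ d)) := by
          apply mul_le_mul (hQbound z hz) _ (mul_nonneg (norm_nonneg _) (norm_nonneg _))
            (le_of_lt hMpos)
          exact mul_le_mul hTz hSz (norm_nonneg _) hδ0
      _ = M * (d + 1) * 2 ^ d * δ := by ring
      _ < ε := by
          rw [← lt_div_iff₀' (mul_pos (mul_pos hMpos (by positivity)) (by positivity))]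
          exact hδε
  · -- the jet
    intro k hk
    rw [iteratedDeriv_polynomial_eval]
    -- Q * (T * S) = Q - Q * (1 - T)^(d+1)
    have key : Q * (T * S) = Q - Q * (1 - T) ^ (d + 1) := by
      have : T * S = 1 - (1 - T) ^ (d + 1) := by
        have := geom_sum_mul (1 - T) (d + 1)
        rw [hS]
        have h2 : (∑ i ∈ range (d + 1), (1 - T) ^ i) * ((1 - T) - 1) =
            (1 - T) ^ (d + 1) - 1 := this
        have h3 : (1 - T) - 1 = -T := by ring
        rw [h3] at h2
        linear_combination -h2
      rw [this]; ring
    rw [key, iterate_derivative_sub, eval_sub]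
    -- second term vanishes
    have hdvd : (X + C (-p)) ^ (d + 1) ∣ Q * (1 - T) ^ (d + 1) := by
      apply Dvd.dvd.mul_left
      apply pow_dvd_pow_of_dvd
      -- X + C (-p) divides 1 - T since (1 - T).eval p = 0
      have : (1 - T).eval p = 0 := by
        rw [hT]
        simp [eval_pow, eval_mul, mul_inv_cancel₀ hp0, inv_mul_cancel₀ hp0]
      have := dvd_iff_isRoot.mpr (show IsRoot (1 - T) p from this)
      simpa [sub_eq_add_neg] using this
    have hvanish : (derivative^[k] (Q * (1 - T) ^ (d + 1))).eval p = 0 := by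
      have hd : (X + C (-p)) ^ (d + 1 - k) ∣ derivative^[k] (Q * (1 - T) ^ (d + 1)) :=
        pow_sub_dvd_iterate_derivative_of_pow_dvd k hdvd
      obtain ⟨g, hg⟩ := hd
      rw [hg, eval_mul, eval_pow]
      have : (X + C (-p)).eval p = 0 := by simp
      rw [this, zero_pow, zero_mul]
      omega
    rw [hvanish, sub_zero]
    -- first term: derivative^[k] Q at p
    rw [hQ, iterate_derivative_sum]
    simp only [iterate_derivative_C_mul, iterate_derivative_X_add_pow]
    rw [eval_finset_sum]
    rw [Finset.sum_eq_single k]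
    · have hfac : ((k.factorial : ℂ)) ≠ 0 := Nat.cast_ne_zero.mpr k.factorial_ne_zero
      simp only [Nat.sub_self, pow_zero, Nat.descFactorial_self, eval_mul, eval_C, eval_smul,
        eval_one, nsmul_eq_mul, mul_one, eval_natCast, smul_eq_mul]
      exact div_mul_cancel₀ (a k) hfac
    · intro i hi hik
      simp only [eval_mul, eval_C, eval_smul, eval_pow, eval_add, eval_neg, eval_X, smul_eq_mul]
      rcases lt_or_gt_of_ne hik with h | h
      · rw [Nat.descFactorial_eq_zero_iff_lt.mpr h]
        simp
      · rw [add_neg_cancel, zero_pow (by omega)]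
        ring
    · intro hk'
      exact absurd (Finset.mem_range.mpr (by omega)) hk'
end

section
/- Let r > 0, let D ⊆ ℂ be a closed subset, discrete in the subspace topology, such that |z| > r for every z ∈ D. Let d ∈ ℕ, let f : D → ℂ^{d+1} be any map, and let ε > 0. Then there exists an entire function F : ℂ → ℂ such that for every γ ∈ D and every k with 0 ≤ k ≤ d the k-th derivative of F at γ equals the k-th component of f(γ), and |F(z)| ≤ ε for all z ∈ ℂ with |z| ≤ r. -/
/-!
Exhaust `D` by the finite layers `Lₘ = D ∩ {|z| ≤ r + m}` and sum polynomials `Pₘ`, where `Pₘ`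
corrects the `d`-jets of `P₀ + ⋯ + Pₘ₋₁` at the new points `Lₘ₊₁ \ Lₘ`, has zero `d`-jets on
`Lₘ`, and is at most `ε / 2^(m+1)` on `{|z| ≤ r + m}`. Jets are handled algebraically: two
polynomials have the same `d`-jet at `γ` iff `(X - γ)^(d+1)` divides their difference. Smallness
comes from the factor `1 - (1 - (z/γ)^M)^(d+1)`, which has the `d`-jet of `1` at `γ` and is
`O((ρ/|γ|)^M)` on `{|z| ≤ ρ}` when `ρ < |γ|`. On each disk all but finitely many `Pₘ` are
uniformly small, so the series converges locally uniformly: its sum is entire, its jets are the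
limits of the jets of the partial sums, which are eventually constant on `D`, and it is bounded
by `∑ ε / 2^(m+1) = ε` on `{|z| ≤ r}`.
-/

open Polynomial Filter Topology Metric Finset
open scoped Nat

namespace Polynomial

variable {𝕜 : Type*} [NontriviallyNormedField 𝕜]

theorem iteratedDeriv_eval (P : 𝕜[X]) (k : ℕ) :
    iteratedDeriv k (fun z => P.eval z) = fun z => (derivative^[k] P).eval z := by
  induction k generalizing P with
  | zero => rfl
  | succ k ih =>
    have hderiv : _root_.deriv (fun z => P.eval z) = fun z => (derivative P).eval z :=
      by ext z; exact Polynomial.deriv P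
    rw [iteratedDeriv_succ', hderiv, ih, Function.iterate_succ_apply]

theorem iteratedDeriv_eval_eq_of_pow_dvd_sub {P Q : 𝕜[X]} {γ : 𝕜} {n k : ℕ}
    (h : (X - C γ) ^ n ∣ P - Q) (hk : k < n) :
    iteratedDeriv k (fun z => P.eval z) γ = iteratedDeriv k (fun z => Q.eval z) γ := by
  have hroot : (X - C γ) ∣ derivative^[k] (P - Q) :=
    (dvd_pow_self _ (Nat.sub_ne_zero_of_lt hk)).trans
      (pow_sub_dvd_iterate_derivative_of_pow_dvd k h)
  rw [iteratedDeriv_eval, iteratedDeriv_eval, ← sub_eq_zero, ← eval_sub, ← iterate_derivative_sub]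
  exact dvd_iff_isRoot.mp hroot

noncomputable def jetPoly {d : ℕ} (γ : 𝕜) (a : Fin (d + 1) → 𝕜) : 𝕜[X] :=
  ∑ j : Fin (d + 1), C (a j / (j : ℕ)!) * (X - C γ) ^ (j : ℕ)

theorem eval_iterate_derivative_jetPoly [CharZero 𝕜] {d : ℕ} (γ : 𝕜) (a : Fin (d + 1) → 𝕜)
    (k : Fin (d + 1)) : (derivative^[k] (jetPoly γ a)).eval γ = a k := by
  have hterm (j : Fin (d + 1)) : (derivative^[k] (C (a j / (j : ℕ)!) * (X - C γ) ^ (j : ℕ))).eval γ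
      = a j / (j : ℕ)! * ((j : ℕ).descFactorial k * 0 ^ ((j : ℕ) - k)) := by
    simp [iterate_derivative_C_mul, iterate_derivative_X_sub_pow]
  rw [jetPoly, iterate_derivative_sum, eval_finsetSum, Finset.sum_eq_single k]
  · rw [hterm, Nat.descFactorial_self, Nat.sub_self, pow_zero, mul_one,
      div_mul_cancel₀ _ (Nat.cast_ne_zero.mpr (Nat.factorial_ne_zero _))]
  · intro j _ hjk
    rw [hterm]
    rcases lt_or_gt_of_ne (Fin.val_ne_of_ne hjk) with h | h
    · simp [Nat.descFactorial_eq_zero_iff_lt.mpr h]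
    · simp [zero_pow (Nat.sub_ne_zero_of_lt h)]
  · simp

end Polynomial

theorem norm_one_sub_one_sub_pow_le {R : Type*} [NormedCommRing R] [NormOneClass R] {q : R}
    (hq : ‖q‖ ≤ 1) (n : ℕ) : ‖1 - (1 - q) ^ n‖ ≤ 2 ^ n * ‖q‖ := by
  have hfactor : 1 - (1 - q) ^ n = q * ∑ i ∈ range n, (1 - q) ^ i := by
    linear_combination geom_sum_mul (1 - q) n
  have hbase : ‖1 - q‖ ≤ 2 := (norm_sub_le _ _).trans (by rw [norm_one]; linarith)
  have hsum : ‖∑ i ∈ range n, (1 - q) ^ i‖ ≤ 2 ^ n :=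
    calc ‖∑ i ∈ range n, (1 - q) ^ i‖ ≤ ∑ i ∈ range n, (2 : ℝ) ^ i :=
          (norm_sum_le _ _).trans (sum_le_sum fun i _ =>
            (norm_pow_le _ i).trans (pow_le_pow_left₀ (norm_nonneg _) hbase i))
      _ ≤ 2 ^ n := by
          have hgeom := geom_sum_mul_add (1 : ℝ) n
          norm_num at hgeom
          linarith
  rw [hfactor, mul_comm]
  exact (norm_mul_le _ _).trans (mul_le_mul_of_nonneg_right hsum (norm_nonneg q))

theorem exists_pow_dvd_sub_one_and_norm_eval_le {γ : ℂ} {ρ δ : ℝ} (hρ : 0 ≤ ρ)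
    (hργ : ρ < ‖γ‖) (hδ : 0 < δ) (n : ℕ) :
    ∃ E : ℂ[X], (X - C γ) ^ n ∣ E - 1 ∧ ∀ z : ℂ, ‖z‖ ≤ ρ → ‖E.eval z‖ ≤ δ := by
  have hγ : 0 < ‖γ‖ := hρ.trans_lt hργ
  set t := ρ / ‖γ‖
  obtain ⟨M, hM⟩ := exists_pow_lt_of_lt_one (by positivity : 0 < δ / 2 ^ n)
    ((div_lt_one hγ).mpr hργ)
  set q : ℂ[X] := (C γ⁻¹ * X) ^ M
  refine ⟨1 - (1 - q) ^ n, ?_, fun z hz => ?_⟩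
  · have hroot : X - C γ ∣ 1 - q := by
      rw [dvd_iff_isRoot]
      simp [q, inv_mul_cancel₀ (norm_pos_iff.mp hγ)]
    rw [sub_sub_cancel_left, dvd_neg]
    exact pow_dvd_pow_of_dvd hroot n
  · have hqz : ‖q.eval z‖ ≤ t ^ M := by
      simp only [q, eval_pow, eval_mul, eval_C, eval_X, norm_pow, norm_mul, norm_inv]
      rw [inv_mul_eq_div]
      exact pow_le_pow_left₀ (by positivity) (div_le_div_of_nonneg_right hz hγ.le) M
    have hq1 : ‖q.eval z‖ ≤ 1 :=
      hqz.trans (pow_le_one₀ (by positivity) ((div_lt_one hγ).mpr hργ).le)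
    calc ‖(1 - (1 - q) ^ n).eval z‖ = ‖1 - (1 - q.eval z) ^ n‖ := by simp
      _ ≤ 2 ^ n * ‖q.eval z‖ := norm_one_sub_one_sub_pow_le hq1 n
      _ ≤ 2 ^ n * (δ / 2 ^ n) := by gcongr; exact hqz.trans hM.le
      _ = δ := by field_simp

theorem exists_poly_pow_dvd_sub_and_norm_eval_le_of_notMem {S : Finset ℂ} {γ : ℂ} (hγS : γ ∉ S)
    (A : ℂ[X]) (n : ℕ) {ρ ε : ℝ} (hρ : 0 ≤ ρ) (hργ : ρ < ‖γ‖) (hε : 0 < ε) :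
    ∃ P : ℂ[X], (X - C γ) ^ n ∣ P - A ∧ (∀ s ∈ S, (X - C s) ^ n ∣ P) ∧
      ∀ z : ℂ, ‖z‖ ≤ ρ → ‖P.eval z‖ ≤ ε := by
  set W := ∏ s ∈ S, (X - C s) ^ n
  have hcop : IsCoprime W ((X - C γ) ^ n) := IsCoprime.prod_left fun s hs =>
    (isCoprime_X_sub_C_of_isUnit_sub (sub_ne_zero.mpr (ne_of_mem_of_not_mem hs hγS)).isUnit).pow
  obtain ⟨u, v, huv⟩ := hcop
  -- `P₀` already has the right jets; the factor `E` makes it small on the disk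
  set P₀ := A * u * W
  obtain ⟨B, hB⟩ := (isCompact_closedBall (0 : ℂ) ρ).exists_bound_of_continuousOn
    P₀.continuous.continuousOn
  obtain ⟨E, hE, hEz⟩ := exists_pow_dvd_sub_one_and_norm_eval_le hρ hργ
    (by positivity : 0 < ε / max B 1) n
  refine ⟨P₀ * E, ?_, fun s hs => ?_, fun z hz => ?_⟩
  · have hsplit : P₀ * E - A = A * (E - 1) - A * v * E * (X - C γ) ^ n := by
      linear_combination A * E * huv
    rw [hsplit]
    exact (dvd_mul_of_dvd_right hE A).sub (dvd_mul_left _ _)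
  · exact ((dvd_prod_of_mem _ hs).trans (dvd_mul_left W _)).mul_right E
  · have hP₀ : ‖P₀.eval z‖ ≤ max B 1 :=
      (hB z (mem_closedBall_zero_iff.mpr hz)).trans (le_max_left _ _)
    calc ‖(P₀ * E).eval z‖ = ‖P₀.eval z‖ * ‖E.eval z‖ := by rw [eval_mul, norm_mul]
      _ ≤ max B 1 * (ε / max B 1) := by gcongr; exact hEz z hz
      _ = ε := mul_div_cancel₀ _ (by positivity)

theorem exists_poly_pow_dvd_sub_and_norm_eval_le {S T : Finset ℂ} (hST : Disjoint S T)
    (A : ℂ → ℂ[X]) (n : ℕ) {ρ ε : ℝ} (hρ : 0 ≤ ρ) (hT : ∀ τ ∈ T, ρ < ‖τ‖) (hε : 0 < ε) :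
    ∃ P : ℂ[X], (∀ τ ∈ T, (X - C τ) ^ n ∣ P - A τ) ∧ (∀ s ∈ S, (X - C s) ^ n ∣ P) ∧
      ∀ z : ℂ, ‖z‖ ≤ ρ → ‖P.eval z‖ ≤ ε := by
  classical
  induction T using Finset.induction_on generalizing S ε with
  | empty => exact ⟨0, by simp, by simp, fun z _ => by simpa using hε.le⟩
  | insert τ T hτT ih =>
    have hτS : τ ∉ S := disjoint_right.mp hST (mem_insert_self τ T)
    obtain ⟨P₁, hP₁T, hP₁S, hP₁z⟩ := ih (S := insert τ S)
      (disjoint_insert_left.mpr ⟨hτT, hST.mono_right (subset_insert τ T)⟩)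
      (fun σ hσ => hT σ (mem_insert_of_mem hσ)) (half_pos hε)
    obtain ⟨P₂, hP₂τ, hP₂S, hP₂z⟩ := exists_poly_pow_dvd_sub_and_norm_eval_le_of_notMem
      (S := S ∪ T) (by simp [hτS, hτT]) (A τ) n hρ (hT τ (mem_insert_self τ T)) (half_pos hε)
    refine ⟨P₁ + P₂, fun σ hσ => ?_, fun s hs => ?_, fun z hz => ?_⟩
    · rcases mem_insert.mp hσ with rfl | hσ
      · rw [add_sub_assoc]
        exact (hP₁S σ (mem_insert_self σ S)).add hP₂τ
      · rw [add_sub_right_comm]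
        exact (hP₁T σ hσ).add (hP₂S σ (mem_union_right S hσ))
    · exact (hP₁S s (mem_insert_of_mem hs)).add (hP₂S s (mem_union_left T hs))
    · calc ‖(P₁ + P₂).eval z‖ ≤ ‖P₁.eval z‖ + ‖P₂.eval z‖ := by
            rw [eval_add]; exact norm_add_le _ _
        _ ≤ ε / 2 + ε / 2 := add_le_add (hP₁z z hz) (hP₂z z hz)
        _ = ε := add_halves ε

theorem tendstoLocallyUniformly_sum_range_tsum {E F : Type*} [NormedAddCommGroup E]
    [ProperSpace E] [NormedAddCommGroup F] [CompleteSpace F] {f : ℕ → E → F} {u : ℕ → ℝ}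
    (hu : Summable u) (hfu : ∀ R : ℝ, ∀ᶠ n in atTop, ∀ z : E, ‖z‖ ≤ R → ‖f n z‖ ≤ u n) :
    TendstoLocallyUniformly (fun N z => ∑ n ∈ range N, f n z) (fun z => ∑' n, f n z) atTop := by
  rw [tendstoLocallyUniformly_iff_forall_isCompact]
  intro K hK
  obtain ⟨R, hKR⟩ := hK.isBounded.subset_closedBall 0
  exact tendstoUniformlyOn_tsum_nat_eventually hu <| (hfu R).mono fun n hn z hz =>
    hn z (mem_closedBall_zero_iff.mp (hKR hz))

section LocallyUniformLimit

variable {E : Type*} [NormedAddCommGroup E] [NormedSpace ℂ E] [CompleteSpace E] {ι : Type*}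
  {l : Filter ι} {F : ι → ℂ → E} {f : ℂ → E}

theorem TendstoLocallyUniformly.differentiable [l.NeBot] (h : TendstoLocallyUniformly F f l)
    (hF : ∀ i, Differentiable ℂ (F i)) : Differentiable ℂ f :=
  differentiableOn_univ.mp <| (tendstoLocallyUniformlyOn_univ.mpr h).differentiableOn
    (Eventually.of_forall fun i => (hF i).differentiableOn) isOpen_univ

theorem TendstoLocallyUniformly.iteratedDeriv (h : TendstoLocallyUniformly F f l)
    (hF : ∀ i, Differentiable ℂ (F i)) (k : ℕ) :
    TendstoLocallyUniformly (fun i => iteratedDeriv k (F i)) (iteratedDeriv k f) l := by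
  induction k with
  | zero => simpa only [iteratedDeriv_zero] using h
  | succ k ih =>
    simp only [iteratedDeriv_succ]
    exact tendstoLocallyUniformlyOn_univ.mp <| (tendstoLocallyUniformlyOn_univ.mpr ih).deriv
      (Eventually.of_forall fun i =>
        ((hF i).contDiff.differentiable_iteratedDeriv' k).differentiableOn) isOpen_univ

end LocallyUniformLimit

theorem exists_seq_forall_sum_range {M : Type*} [AddCommMonoid M] {p : ℕ → M → M → Prop}
    (h : ∀ m b, ∃ x, p m b x) : ∃ x : ℕ → M, ∀ m, p m (∑ i ∈ range m, x i) (x m) := by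
  choose g hg using h
  let b : ℕ → M := fun m => Nat.rec 0 (fun m bm => bm + g m bm) m
  have hb (m : ℕ) : b m = ∑ i ∈ range m, g i (b i) := by
    induction m with
    | zero => rfl
    | succ m ih => rw [sum_range_succ, ← ih]
  exact ⟨fun m => g m (b m), fun m => hb m ▸ hg m (b m)⟩

theorem exists_poly_seq_pow_dvd_sum_range_sub {D : Set ℂ} (hDclosed : IsClosed D)
    (hDdisc : DiscreteTopology D) {r : ℝ} (hr : 0 ≤ r) (hDr : ∀ z ∈ D, r < ‖z‖)
    (J : ℂ → ℂ[X]) (n : ℕ) {ε : ℝ} (hε : 0 < ε) :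
    ∃ P : ℕ → ℂ[X], (∀ m : ℕ, ∀ z : ℂ, ‖z‖ ≤ r + m → ‖(P m).eval z‖ ≤ ε / 2 / 2 ^ m) ∧
      ∀ γ ∈ D, ∀ᶠ N in atTop, (X - C γ) ^ n ∣ ∑ m ∈ range N, P m - J γ := by
  classical
  have hfin (m : ℕ) : (closedBall (0 : ℂ) (r + m) ∩ D).Finite :=
    finite_isBounded_inter_isClosed hDdisc.isDiscrete isBounded_closedBall hDclosed
  set L : ℕ → Finset ℂ := fun m => (hfin m).toFinset
  have hL {m : ℕ} {z : ℂ} : z ∈ L m ↔ ‖z‖ ≤ r + m ∧ z ∈ D := by simp [L]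
  obtain ⟨P, hP⟩ := exists_seq_forall_sum_range (M := ℂ[X]) (p := fun m B Q =>
    (∀ τ ∈ L (m + 1) \ L m, (X - C τ) ^ n ∣ Q - (J τ - B)) ∧ (∀ s ∈ L m, (X - C s) ^ n ∣ Q) ∧
      ∀ z : ℂ, ‖z‖ ≤ r + m → ‖Q.eval z‖ ≤ ε / 2 / 2 ^ m) fun m B =>
    exists_poly_pow_dvd_sub_and_norm_eval_le disjoint_sdiff (fun τ => J τ - B) n (by positivity)
      (fun τ hτ => by
        obtain ⟨hτ₁, hτ₀⟩ := mem_sdiff.mp hτ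
        exact lt_of_not_ge fun h => hτ₀ (hL.mpr ⟨h, (hL.mp hτ₁).2⟩))
      (by positivity)
  have hjets (N : ℕ) : ∀ γ ∈ L N, (X - C γ) ^ n ∣ ∑ m ∈ range N, P m - J γ := by
    induction N with
    | zero => exact fun γ hγ => absurd (hDr γ (hL.mp hγ).2) (by simpa using (hL.mp hγ).1)
    | succ N ih =>
      intro γ hγ
      rw [sum_range_succ]
      by_cases hγN : γ ∈ L N
      · rw [add_sub_right_comm]
        exact (ih γ hγN).add ((hP N).2.1 γ hγN)
      · have := (hP N).1 γ (mem_sdiff.mpr ⟨hγ, hγN⟩)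
        rwa [sub_sub_eq_add_sub, add_comm] at this
  refine ⟨P, fun m => (hP m).2.2, fun γ hγ => ?_⟩
  obtain ⟨N₀, hN₀⟩ := exists_nat_ge (‖γ‖ - r)
  filter_upwards [eventually_ge_atTop N₀] with N hN
  exact hjets N γ (hL.mpr ⟨by linarith [(Nat.cast_le (α := ℝ)).mpr hN], hγ⟩)

/-- Let `D ⊆ ℂ` be a closed discrete subset with `|z| > r` for all `z ∈ D`, let `d ∈ ℕ`,
`f : D → ℂ^{d+1}` and `ε > 0`. Then there is an entire function `F` whose `d`-jet at each
point `γ ∈ D` equals `f(γ)` and with `|F| ≤ ε` on the disk `{|z| ≤ r}`. -/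
theorem exists_entire_with_prescribed_jets_small_on_disk (r : ℝ) (hr : 0 < r)
    (D : Set ℂ) (hDclosed : IsClosed D) (hDdisc : DiscreteTopology D)
    (hDr : ∀ z ∈ D, r < ‖z‖) (d : ℕ) (f : D → Fin (d + 1) → ℂ) (ε : ℝ) (hε : 0 < ε) :
    ∃ F : ℂ → ℂ, Differentiable ℂ F ∧
      (∀ (γ : D) (k : Fin (d + 1)), iteratedDeriv k.1 F (γ : ℂ) = f γ k) ∧
      ∀ z : ℂ, ‖z‖ ≤ r → ‖F z‖ ≤ ε := by
  classical
  obtain ⟨P, hPsmall, hPjets⟩ := exists_poly_seq_pow_dvd_sum_range_sub hDclosed hDdisc hr.le hDr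
    (fun γ => if h : γ ∈ D then jetPoly γ (f ⟨γ, h⟩) else 0) (d + 1) hε
  have hconv := tendstoLocallyUniformly_sum_range_tsum (f := fun m z => (P m).eval z)
    (summable_geometric_two' ε) fun R => by
      obtain ⟨N₀, hN₀⟩ := exists_nat_ge (R - r)
      filter_upwards [eventually_ge_atTop N₀] with m hm z hz
      exact hPsmall m z (by linarith [(Nat.cast_le (α := ℝ)).mpr hm])
  simp only [← eval_finsetSum] at hconv
  refine ⟨_, hconv.differentiable fun N => Polynomial.differentiable _, fun γ k => ?_,
    fun z hz => tsum_of_norm_bounded (hasSum_geometric_two' ε) fun m =>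
      hPsmall m z (hz.trans (le_add_of_nonneg_right m.cast_nonneg))⟩
  have hjets := (hconv.iteratedDeriv (fun N => Polynomial.differentiable _) k)
    |>.tendstoLocallyUniformlyOn (s := Set.univ) |>.tendsto_at (Set.mem_univ (γ : ℂ))
  refine tendsto_nhds_unique hjets (tendsto_const_nhds.congr' ?_)
  filter_upwards [hPjets γ γ.2] with N hN
  rw [iteratedDeriv_eval_eq_of_pow_dvd_sub hN k.isLt, iteratedDeriv_eval, dif_pos γ.2]
  exact (eval_iterate_derivative_jetPoly (γ : ℂ) (f γ) k).symm
end

section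
/- Let n ≥ 1. There exists an infinite subset Γ ⊆ ℂⁿ such that for every entire function F : ℂⁿ → ℂ that is not identically zero, the set {γ ∈ Γ : F(γ) = 0} is finite. -/
/-!
An entire curve `c : ℂ → ℂⁿ` with dense image is a uniqueness set for entire functions: if
`F ∘ c ≡ 0` then `F` vanishes on a dense set, hence everywhere. Take `Γ` to be the image of the
sequence `1 / (m + 1)` under `c`. If `F` vanished at infinitely many points of `Γ`, the zeros of
the one-variable function `F ∘ c` would accumulate at `0`, so `F ∘ c ≡ 0` and `F ≡ 0`. The same
identity theorem shows that `Γ` is infinite, since otherwise `c` would be constant.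

Such a curve is the Gaussian series `c t = ∑ exp (-(t - ν²)²) • dᵥ`, where `dᵥ` visits every
point of a dense sequence infinitely often and grows at most linearly: the nodes `ν²` are so far
apart that `c (μ²) - d_μ` decays like `exp (-μ)`, so the values `c (μ²)` are dense as well.
-/

open Filter Topology

lemma Complex.norm_exp_neg_sq_sub_ofReal_le {t : ℂ} {R : ℝ} (ht : ‖t‖ ≤ R) (s : ℝ) :
    ‖Complex.exp (-(t - s) ^ 2)‖ ≤ Real.exp (R ^ 2 + 2 * R * |s| - s ^ 2) := by
  have hre : (-(t - s) ^ 2).re = t.im ^ 2 - t.re ^ 2 + 2 * s * t.re - s ^ 2 := by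
    simp only [sq, Complex.neg_re, Complex.mul_re, Complex.sub_re, Complex.sub_im,
      Complex.ofReal_re, Complex.ofReal_im]
    ring
  have him : t.im ^ 2 ≤ R ^ 2 := by
    simpa only [sq_abs] using
      pow_le_pow_left₀ (abs_nonneg _) ((Complex.abs_im_le_norm t).trans ht) 2
  have hmix : s * t.re ≤ R * |s| := by
    calc s * t.re ≤ |s| * |t.re| := by rw [← abs_mul]; exact le_abs_self _
      _ ≤ |s| * R := by gcongr; exact (Complex.abs_re_le_norm t).trans ht
      _ = R * |s| := mul_comm _ _
  rw [Complex.norm_exp, Real.exp_le_exp, hre]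
  nlinarith [sq_nonneg t.re]

lemma summable_natCast_mul_exp_neg_natCast :
    Summable fun ν : ℕ => (ν : ℝ) * Real.exp (-ν) := by
  simpa using Real.summable_pow_mul_exp_neg_nat_mul 1 one_pos

lemma summable_natCast_mul_exp_quartic (a b : ℝ) :
    Summable fun ν : ℕ => (ν : ℝ) * Real.exp (a + b * ν ^ 2 - ν ^ 4) := by
  refine summable_natCast_mul_exp_neg_natCast.of_norm_bounded_eventually_nat ?_
  filter_upwards [eventually_ge_atTop (⌈|a|⌉₊ + ⌈|b|⌉₊ + 2)] with ν hν
  have h2 : (2 : ℝ) ≤ ν := by exact_mod_cast (by omega : 2 ≤ ν)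
  have ha : a ≤ ν := (le_abs_self a).trans <|
    (Nat.le_ceil _).trans (by exact_mod_cast (by omega : ⌈|a|⌉₊ ≤ ν))
  have hb : b ≤ ν := (le_abs_self b).trans <|
    (Nat.le_ceil _).trans (by exact_mod_cast (by omega : ⌈|b|⌉₊ ≤ ν))
  have hexp : a + b * ν ^ 2 - ν ^ 4 ≤ -ν := by
    nlinarith [mul_le_mul_of_nonneg_right hb (sq_nonneg (ν : ℝ)),
      mul_le_mul_of_nonneg_left h2 (by positivity : (0 : ℝ) ≤ ν ^ 3),
      mul_le_mul_of_nonneg_left h2 (by positivity : (0 : ℝ) ≤ ν ^ 2)]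
  rw [Real.norm_of_nonneg (by positivity)]
  gcongr

lemma natCast_add_le_sq_sub_sq_sq {μ ν : ℕ} (h : μ ≠ ν) :
    (μ : ℝ) + ν ≤ ((μ : ℝ) ^ 2 - (ν : ℝ) ^ 2) ^ 2 := by
  have hsep : (1 : ℝ) ≤ ((μ : ℝ) - ν) ^ 2 := by
    rcases h.lt_or_gt with hlt | hlt
    · have : (μ : ℝ) + 1 ≤ ν := by exact_mod_cast hlt
      nlinarith
    · have : (ν : ℝ) + 1 ≤ μ := by exact_mod_cast hlt
      nlinarith
  have hsum : (μ : ℝ) + ν ≤ ((μ : ℝ) + ν) ^ 2 := by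
    have : (1 : ℝ) ≤ μ + ν := by exact_mod_cast (by omega : 1 ≤ μ + ν)
    nlinarith
  calc (μ : ℝ) + ν ≤ ((μ : ℝ) + ν) ^ 2 := hsum
    _ ≤ ((μ : ℝ) - ν) ^ 2 * ((μ : ℝ) + ν) ^ 2 := le_mul_of_one_le_left (sq_nonneg _) hsep
    _ = ((μ : ℝ) ^ 2 - (ν : ℝ) ^ 2) ^ 2 := by ring

section GaussianSeries

variable {E : Type*} [NormedAddCommGroup E] [NormedSpace ℂ E] {d : ℕ → E}

noncomputable def gaussianSeries (d : ℕ → E) (t : ℂ) : E :=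
  ∑' ν : ℕ, Complex.exp (-(t - (ν : ℂ) ^ 2) ^ 2) • d ν

lemma norm_exp_smul_le_of_norm_le (hd : ∀ ν, ‖d ν‖ ≤ ν) {t : ℂ} {R : ℝ} (ht : ‖t‖ ≤ R)
    (ν : ℕ) :
    ‖Complex.exp (-(t - (ν : ℂ) ^ 2) ^ 2) • d ν‖
      ≤ ν * Real.exp (R ^ 2 + 2 * R * ν ^ 2 - ν ^ 4) := by
  have hexp := Complex.norm_exp_neg_sq_sub_ofReal_le ht ((ν : ℝ) ^ 2)
  rw [abs_of_nonneg (by positivity), ← pow_mul] at hexp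
  push_cast at hexp
  rw [norm_smul, mul_comm]
  exact mul_le_mul (hd ν) hexp (norm_nonneg _) (Nat.cast_nonneg ν)

variable [CompleteSpace E]

lemma summable_gaussianSeries (hd : ∀ ν, ‖d ν‖ ≤ ν) (t : ℂ) :
    Summable fun ν : ℕ => Complex.exp (-(t - (ν : ℂ) ^ 2) ^ 2) • d ν :=
  (summable_natCast_mul_exp_quartic _ _).of_norm_bounded
    (norm_exp_smul_le_of_norm_le hd le_rfl)

lemma differentiable_gaussianSeries (hd : ∀ ν, ‖d ν‖ ≤ ν) :
    Differentiable ℂ (gaussianSeries d) := by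
  intro t
  have hball : DifferentiableOn ℂ (gaussianSeries d) (Metric.ball 0 (‖t‖ + 1)) :=
    Complex.differentiableOn_tsum_of_summable_norm (summable_natCast_mul_exp_quartic _ _)
      (fun ν => by fun_prop) Metric.isOpen_ball
      (fun ν w hw => norm_exp_smul_le_of_norm_le hd (mem_ball_zero_iff.1 hw).le ν)
  exact hball.differentiableAt (Metric.isOpen_ball.mem_nhds (by simp))

lemma norm_gaussianSeries_sq_sub_le (hd : ∀ ν, ‖d ν‖ ≤ ν) (μ : ℕ) :
    ‖gaussianSeries d ((μ : ℂ) ^ 2) - d μ‖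
      ≤ Real.exp (-μ) * ∑' ν : ℕ, (ν : ℝ) * Real.exp (-ν) := by
  classical
  have hterm : ∀ ν : ℕ, ν ≠ μ →
      ‖Complex.exp (-((μ : ℂ) ^ 2 - (ν : ℂ) ^ 2) ^ 2) • d ν‖
        ≤ Real.exp (-μ) * ((ν : ℝ) * Real.exp (-ν)) := by
    intro ν hν
    have hreal :
        -((μ : ℂ) ^ 2 - (ν : ℂ) ^ 2) ^ 2 = ((-((μ : ℝ) ^ 2 - (ν : ℝ) ^ 2) ^ 2 : ℝ) : ℂ) := by
      push_cast; ring
    have hexp : Real.exp (-((μ : ℝ) ^ 2 - (ν : ℝ) ^ 2) ^ 2) ≤ Real.exp (-μ) * Real.exp (-ν) := by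
      rw [← Real.exp_add, Real.exp_le_exp]
      linarith [natCast_add_le_sq_sub_sq_sq hν.symm]
    rw [norm_smul, hreal, Complex.norm_exp_ofReal, mul_left_comm, mul_comm]
    exact mul_le_mul (hd ν) hexp (by positivity) (Nat.cast_nonneg ν)
  have hnode : Complex.exp (-((μ : ℂ) ^ 2 - (μ : ℂ) ^ 2) ^ 2) • d μ = d μ := by simp
  rw [gaussianSeries, (summable_gaussianSeries hd _).tsum_eq_add_tsum_ite μ, hnode,
    add_sub_cancel_left]
  refine tsum_of_norm_bounded (summable_natCast_mul_exp_neg_natCast.hasSum.mul_left _) ?_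
  intro ν
  split_ifs with hν
  · rw [norm_zero]; positivity
  · exact hterm ν hν

lemma tendsto_gaussianSeries_sq_sub (hd : ∀ ν, ‖d ν‖ ≤ ν) :
    Tendsto (fun μ : ℕ => gaussianSeries d ((μ : ℂ) ^ 2) - d μ) atTop (𝓝 0) := by
  refine squeeze_zero_norm (norm_gaussianSeries_sq_sub_le hd) ?_
  simpa using (Real.tendsto_exp_neg_atTop_nhds_zero.comp
    tendsto_natCast_atTop_atTop).mul_const (∑' ν : ℕ, (ν : ℝ) * Real.exp (-ν))

end GaussianSeries

lemma exists_seq_norm_le_forall_mapClusterPt (E : Type*) [NormedAddCommGroup E]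
    [TopologicalSpace.SeparableSpace E] :
    ∃ d : ℕ → E, (∀ ν, ‖d ν‖ ≤ ν) ∧ ∀ x, MapClusterPt x atTop d := by
  classical
  set e := TopologicalSpace.denseSeq E
  -- `e i` sits at every index `ν = Nat.pair i k` with `‖e i‖ ≤ ν`: infinitely often, and
  -- never where it would break `‖d ν‖ ≤ ν`.
  refine ⟨fun ν => if ‖e ν.unpair.1‖ ≤ ν then e ν.unpair.1 else 0, fun ν => ?_, fun x => ?_⟩
  · dsimp only
    split_ifs with h
    exacts [h, by simp]
  · rw [mapClusterPt_iff_frequently]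
    intro s hs
    obtain ⟨_, ⟨i, rfl⟩, hes⟩ := (TopologicalSpace.denseRange_denseSeq E).inter_nhds_nonempty hs
    rw [frequently_atTop]
    intro M
    have hpair : max M ⌈‖e i‖⌉₊ ≤ Nat.pair i (max M ⌈‖e i‖⌉₊) := Nat.right_le_pair _ _
    refine ⟨_, (le_max_left _ _).trans hpair, ?_⟩
    rw [Nat.unpair_pair, if_pos]
    · exact hes
    · exact (Nat.le_ceil _).trans (by exact_mod_cast (le_max_right _ _).trans hpair)

lemma denseRange_of_tendsto_sub_of_forall_mapClusterPt {X : Type*} [SeminormedAddCommGroup X]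
    {f d : ℕ → X} (hd : ∀ x, MapClusterPt x atTop d)
    (h : Tendsto (fun ν => f ν - d ν) atTop (𝓝 0)) : DenseRange f := by
  refine Metric.denseRange_iff.2 fun x r hr => ?_
  have hnear := (hd x).frequently (Metric.ball_mem_nhds x (half_pos hr))
  have hclose := h.eventually (Metric.ball_mem_nhds 0 (half_pos hr))
  obtain ⟨ν, hdν, hfν⟩ := (hnear.and_eventually hclose).exists
  rw [dist_comm] at hdν
  rw [dist_zero_right, ← dist_eq_norm, dist_comm] at hfν
  exact ⟨ν, (dist_triangle x (d ν) (f ν)).trans_lt (by linarith)⟩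

theorem exists_differentiable_denseRange (E : Type*) [NormedAddCommGroup E] [NormedSpace ℂ E]
    [CompleteSpace E] [TopologicalSpace.SeparableSpace E] :
    ∃ c : ℂ → E, Differentiable ℂ c ∧ DenseRange c := by
  obtain ⟨d, hd, hclust⟩ := exists_seq_norm_le_forall_mapClusterPt E
  refine ⟨gaussianSeries d, differentiable_gaussianSeries hd, ?_⟩
  exact (denseRange_of_tendsto_sub_of_forall_mapClusterPt hclust
    (tendsto_gaussianSeries_sq_sub hd)).mono (Set.range_comp_subset_range _ _)

lemma tendsto_one_div_add_one_nhdsNE_zero :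
    Tendsto (fun m : ℕ => 1 / ((m : ℂ) + 1)) atTop (𝓝[≠] 0) :=
  tendsto_nhdsWithin_iff.2 ⟨tendsto_one_div_add_atTop_nhds_zero_nat,
    Eventually.of_forall fun m => one_div_ne_zero (Nat.cast_add_one_ne_zero m)⟩

section EntireCurve

variable {E G : Type*} [NormedAddCommGroup E] [NormedSpace ℂ E]
  [NormedAddCommGroup G] [NormedSpace ℂ G]
  {c : ℂ → E} {u : ℕ → ℂ} {z₀ : ℂ}

lemma Differentiable.eq_of_infinite_setOf_eq [CompleteSpace E] {f g : ℂ → E}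
    (hf : Differentiable ℂ f) (hg : Differentiable ℂ g) (hu : Tendsto u atTop (𝓝[≠] z₀))
    (h : {m | f (u m) = g (u m)}.Infinite) : f = g := by
  have hfreq : ∃ᶠ z in 𝓝[≠] z₀, f z = g z :=
    hu.frequently (Nat.frequently_atTop_iff_infinite.2 h)
  funext z
  exact AnalyticOnNhd.eqOn_of_preconnected_of_frequently_eq (fun z _ => hf.analyticAt z)
    (fun z _ => hg.analyticAt z) isPreconnected_univ (Set.mem_univ z₀) hfreq (Set.mem_univ z)

lemma infinite_range_comp_of_denseRange [CompleteSpace E] [Nontrivial E]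
    (hc : Differentiable ℂ c) (hdense : DenseRange c) (hu : Tendsto u atTop (𝓝[≠] z₀)) :
    (Set.range (c ∘ u)).Infinite := by
  intro hfin
  obtain ⟨w, hw⟩ : ∃ w, {m | c (u m) = w}.Infinite := by
    by_contra! h
    have hall := hfin.preimage' (f := c ∘ u) fun w _ => h w
    rw [Set.preimage_range] at hall
    exact Set.infinite_univ hall
  have hconst : c = fun _ => w := hc.eq_of_infinite_setOf_eq (differentiable_const w) hu hw
  obtain ⟨x, hx⟩ := exists_ne w
  have hxw := hdense x
  rw [hconst, Set.range_const, closure_singleton] at hxw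
  exact hx hxw

lemma finite_setOf_mem_range_comp_eq_zero [CompleteSpace G] (hc : Differentiable ℂ c)
    (hdense : DenseRange c) (hu : Tendsto u atTop (𝓝[≠] z₀)) {F : E → G}
    (hF : Differentiable ℂ F) (hF0 : ∃ x, F x ≠ 0) : {γ ∈ Set.range (c ∘ u) | F γ = 0}.Finite := by
  have hfin : {m | F (c (u m)) = 0}.Finite := by
    by_contra hinf
    have hcomp : F ∘ c = fun _ => 0 :=
      (hF.comp hc).eq_of_infinite_setOf_eq (differentiable_const 0) hu hinf
    obtain ⟨x, hx⟩ := hF0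
    exact hx (congrFun (hdense.equalizer hF.continuous continuous_const hcomp) x)
  refine (hfin.image (c ∘ u)).subset ?_
  rintro _ ⟨⟨m, rfl⟩, hm⟩
  exact ⟨m, hm, rfl⟩

end EntireCurve

/-- For `n ≥ 1` there is an infinite subset `Γ ⊆ ℂⁿ` meeting the zero set of every
entire function `F : ℂⁿ → ℂ` that is not identically zero in only finitely many points. -/
theorem exists_infinite_nondegenerate_set_complex {n : ℕ} (hn : 1 ≤ n) :
    ∃ Γ : Set (Fin n → ℂ), Γ.Infinite ∧
      ∀ F : (Fin n → ℂ) → ℂ, Differentiable ℂ F → (∃ x, F x ≠ 0) →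
        {γ ∈ Γ | F γ = 0}.Finite := by
  have : Nonempty (Fin n) := ⟨⟨0, hn⟩⟩
  obtain ⟨c, hc, hdense⟩ := exists_differentiable_denseRange (Fin n → ℂ)
  exact ⟨_, infinite_range_comp_of_denseRange hc hdense tendsto_one_div_add_one_nhdsNE_zero,
    fun F hF hF0 => finite_setOf_mem_range_comp_eq_zero hc hdense
      tendsto_one_div_add_one_nhdsNE_zero hF hF0⟩
end

section
/- Let n ≥ 1. There exists an infinite subset Γ ⊆ ℝⁿ such that for every real-analytic function F : ℝⁿ → ℝ that is not identically zero, the set {γ ∈ Γ : F(γ) = 0} is finite. -/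
/-!
Take `γₖ = tₖ • wₖ` with `wₖ = (e^k, e^(k²), …, e^(kⁿ))` and `tₖ = e^(-k^(n+1))`, so `γₖ → 0`.
An analytic `F ≢ 0` is not flat at `0` (identity theorem), so `F = Q + O(‖y‖^(m+1))` where `Q ≠ 0`
is its lowest-order homogeneous part, and `F(γₖ) = tₖ^m (Q(wₖ) + O(tₖ ‖wₖ‖^(m+1)))` with an error
tending to `0`. Writing `Q(y) = ∑ a_α yᵅ`, the monomial `wₖᵅ` equals `exp (k ∑ⱼ αⱼ kʲ)`; for `k > m`
these exponents are distinct (base-`k` digits), hence at least `k` apart, so the largest surviving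
term dominates and `|Q(wₖ)|` stays bounded below. Thus `F(γₖ) ≠ 0` for all large `k`.
-/

open Finset Filter Topology Asymptotics Real

theorem HasFPowerSeriesAt.exists_apply_diag_ne_zero_isBigO {𝕜 E F : Type*}
    [NontriviallyNormedField 𝕜] [NormedAddCommGroup E] [NormedSpace 𝕜 E] [NormedAddCommGroup F]
    [NormedSpace 𝕜 F] {f : E → F} {p : FormalMultilinearSeries 𝕜 E F} (hp : HasFPowerSeriesAt f p 0)
    (hf : ¬f =ᶠ[𝓝 0] 0) :
    ∃ m, (∃ y, p m (fun _ => y) ≠ 0) ∧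
      (fun y => f y - p m (fun _ => y)) =O[𝓝 0] fun y => ‖y‖ ^ (m + 1) := by
  classical
  have hex : ∃ m y, p m (fun _ => y) ≠ 0 := by
    by_contra! h
    refine hf ?_
    filter_upwards [hp.eventually_hasSum] with y hy
    rw [zero_add, show (fun n => p n fun _ => y) = 0 from funext fun n => h n y] at hy
    exact hy.unique hasSum_zero
  refine ⟨Nat.find hex, Nat.find_spec hex, ?_⟩
  have hsum (y : E) : p.partialSum (Nat.find hex + 1) y = p (Nat.find hex) fun _ => y := by
    rw [FormalMultilinearSeries.partialSum, sum_range_succ, sum_eq_zero, zero_add]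
    intro i hi
    exact not_not.mp (not_exists.mp (Nat.find_min hex (mem_range.mp hi)) y)
  simpa [hsum] using hp.isBigO_sub_partialSum_pow (Nat.find hex + 1)

theorem MultilinearMap.exists_apply_diag_eq_sum_monomial {R ι κ : Type*} [CommSemiring R]
    [Fintype ι] [DecidableEq ι] [Fintype κ] (f : MultilinearMap R (fun _ : κ => ι → R) R) :
    ∃ (A : Finset (ι → ℕ)) (a : (ι → ℕ) → R), (∀ α ∈ A, ∑ j, α j = Fintype.card κ) ∧
      ∀ y, f (fun _ => y) = ∑ α ∈ A, a α * ∏ j, y j ^ α j := by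
  classical
  let cnt (d : κ → ι) : ι → ℕ := fun j => #{i | d i = j}
  refine ⟨univ.image cnt, fun α => ∑ d with cnt d = α, f fun i => Pi.single (d i) 1, ?_, ?_⟩
  · simp only [mem_image, mem_univ, true_and, forall_exists_index]
    rintro _ d rfl
    exact (card_eq_sum_card_fiberwise fun i _ => mem_univ (d i)).symm
  · intro y
    have hprod (d : κ → ι) : ∏ i, y (d i) = ∏ j, y j ^ cnt d j := by
      rw [prod_comp]
      refine prod_subset (subset_univ _) fun j _ hj => ?_
      have : #{i | d i = j} = 0 := card_eq_zero.mpr <| filter_eq_empty_iff.mpr fun i _ h =>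
        hj (h ▸ mem_image_of_mem d (mem_univ i))
      rw [this, pow_zero]
    calc f (fun _ => y) = ∑ d : κ → ι, f fun i => y (d i) • Pi.single (d i) 1 := by
          conv_lhs => rw [pi_eq_sum_univ' y]
          exact f.map_sum fun _ j => y j • Pi.single j 1
      _ = ∑ d : κ → ι, (∏ j, y j ^ cnt d j) * f fun i => Pi.single (d i) 1 := by
          simp_rw [f.map_smul_univ, hprod, smul_eq_mul]
      _ = _ := by
          rw [← sum_fiberwise_of_maps_to fun d _ => mem_image_of_mem cnt (mem_univ d)]
          refine sum_congr rfl fun α _ => ?_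
          rw [sum_mul]
          exact sum_congr rfl fun d hd => by rw [(mem_filter.mp hd).2, mul_comm]

theorem Nat.injOn_sum_mul_pow {n b : ℕ} (hb : 1 < b) :
    Set.InjOn (fun α : Fin n → ℕ => ∑ j, α j * b ^ (j : ℕ)) {α | ∀ j, α j < b} := by
  intro α hα β hβ h
  refine List.ofFn_inj.mp (Nat.ofDigits_inj_of_len_eq hb (by simp) ?_ ?_ ?_)
  · simpa [List.mem_ofFn] using hα
  · simpa [List.mem_ofFn] using hβ
  · simpa [Nat.ofDigits_eq_sum_mapIdx, List.mapIdx_eq_ofFn, List.sum_ofFn, mul_comm] using h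

theorem exp_mul_sub_le_abs_sum_mul_exp {ι : Type*} {s : Finset ι} {a v : ι → ℝ} {i₀ : ι}
    (hi₀ : i₀ ∈ s) (hgap : ∀ i ∈ s, i ≠ i₀ → v i + 1 ≤ v i₀) {x : ℝ} (hx : 0 ≤ x) :
    exp (x * v i₀) * (|a i₀| - exp (-x) * ∑ i ∈ s, |a i|) ≤ |∑ i ∈ s, a i * exp (x * v i)| := by
  classical
  have hrest : |∑ i ∈ s.erase i₀, a i * exp (x * v i)|
      ≤ exp (x * v i₀) * (exp (-x) * ∑ i ∈ s, |a i|) := calc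
    _ ≤ ∑ i ∈ s.erase i₀, |a i| * exp (x * v i) :=
        (abs_sum_le_sum_abs _ _).trans_eq (by simp [abs_mul])
    _ ≤ ∑ i ∈ s.erase i₀, |a i| * (exp (x * v i₀) * exp (-x)) := by
        refine sum_le_sum fun i hi => mul_le_mul_of_nonneg_left ?_ (abs_nonneg _)
        rw [← exp_add, exp_le_exp]
        nlinarith [hgap i (mem_of_mem_erase hi) (ne_of_mem_erase hi)]
    _ ≤ ∑ i ∈ s, |a i| * (exp (x * v i₀) * exp (-x)) :=
        sum_le_sum_of_subset_of_nonneg (erase_subset _ _) fun _ _ _ => by positivity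
    _ = _ := by rw [← sum_mul]; ring
  have hlead : |a i₀ * exp (x * v i₀)| = exp (x * v i₀) * |a i₀| := by
    rw [abs_mul, abs_of_pos (exp_pos _), mul_comm]
  have htri := abs_sub_abs_le_abs_sub (a i₀ * exp (x * v i₀))
    (-∑ i ∈ s.erase i₀, a i * exp (x * v i))
  rw [sub_neg_eq_add, abs_neg, add_sum_erase s (fun i => a i * exp (x * v i)) hi₀] at htri
  linarith

theorem exists_pos_eventually_le_abs_sum_mul_exp {ι : Type*} (s : Finset ι) (a : ι → ℝ)
    (v : ι → ℕ → ℕ) (hv : ∀ᶠ k in atTop, Set.InjOn (v · k) s) (ha : ∃ i ∈ s, a i ≠ 0) :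
    ∃ ε > 0, ∀ᶠ k : ℕ in atTop, ε ≤ |∑ i ∈ s, a i * exp (k * v i k)| := by
  classical
  set S := s.filter (a · ≠ 0)
  have hS : S.Nonempty := by simpa [S, Finset.Nonempty] using ha
  obtain ⟨i₁, hi₁, hmin⟩ := S.exists_min_image (|a ·|) hS
  have hε : 0 < |a i₁| := abs_pos.mpr (mem_filter.mp hi₁).2
  refine ⟨|a i₁| / 2, by positivity, ?_⟩
  have hsmall : ∀ᶠ k : ℕ in atTop, exp (-k) * ∑ i ∈ S, |a i| ≤ |a i₁| / 2 := by
    have h := (tendsto_exp_neg_atTop_nhds_zero.comp tendsto_natCast_atTop_atTop).mul_const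
      (∑ i ∈ S, |a i|)
    rw [zero_mul] at h
    exact h.eventually (ge_mem_nhds (by positivity))
  filter_upwards [hv, hsmall] with k hinj hk
  obtain ⟨i₀, hi₀, hmax⟩ := S.exists_max_image (v · k) hS
  have hgap : ∀ i ∈ S, i ≠ i₀ → (v i k : ℝ) + 1 ≤ v i₀ k := fun i hi hne => by
    have hlt := (hmax i hi).lt_of_ne fun h => hne <|
      hinj (mem_filter.mp hi).1 (mem_filter.mp hi₀).1 h
    exact_mod_cast hlt
  have hsum : ∑ i ∈ S, a i * exp (k * v i k) = ∑ i ∈ s, a i * exp (k * v i k) :=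
    sum_filter_of_ne fun i _ h => left_ne_zero_of_mul h
  calc |a i₁| / 2 ≤ 1 * (|a i₀| - exp (-k) * ∑ i ∈ S, |a i|) := by linarith [hmin i₀ hi₀]
    _ ≤ exp (k * v i₀ k) * (|a i₀| - exp (-k) * ∑ i ∈ S, |a i|) := by
        gcongr
        · linarith [hmin i₀ hi₀]
        · exact one_le_exp (by positivity)
    _ ≤ _ := hsum ▸ exp_mul_sub_le_abs_sum_mul_exp hi₀ hgap (Nat.cast_nonneg k)

theorem eventually_ne_zero_of_isBigO_sub_apply_diag {E F : Type*} [NormedAddCommGroup E]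
    [NormedSpace ℝ E] [NormedAddCommGroup F] [NormedSpace ℝ F] {f : E → F} {m : ℕ}
    {Q : ContinuousMultilinearMap ℝ (fun _ : Fin m => E) F}
    (hf : (fun y => f y - Q fun _ => y) =O[𝓝 0] fun y => ‖y‖ ^ (m + 1))
    {t : ℕ → ℝ} {w : ℕ → E} (ht : ∀ k, 0 < t k) (hlim : Tendsto (fun k => t k • w k) atTop (𝓝 0))
    (hsmall : Tendsto (fun k => t k * ‖w k‖ ^ (m + 1)) atTop (𝓝 0)) {ε : ℝ} (hε : 0 < ε)
    (hQ : ∀ᶠ k in atTop, ε ≤ ‖Q fun _ => w k‖) : ∀ᶠ k in atTop, f (t k • w k) ≠ 0 := by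
  obtain ⟨C, hC⟩ := (hf.comp_tendsto hlim).bound
  have hC' : ∀ᶠ k in atTop, C * (t k * ‖w k‖ ^ (m + 1)) < ε := by
    have h := hsmall.const_mul C
    rw [mul_zero] at h
    exact h.eventually_lt_const hε
  filter_upwards [hC, hC', hQ] with k hk hk' hQk hzero
  have hhom : (Q fun _ => t k • w k) = t k ^ m • Q fun _ => w k := by
    simpa using Q.map_smul_univ (fun _ => t k) fun _ => w k
  simp only [Function.comp_apply, hzero, zero_sub, norm_neg, hhom, norm_smul, norm_pow,
    Real.norm_of_nonneg (ht k).le, norm_mul, norm_norm] at hk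
  have : t k ^ m * ‖Q fun _ => w k‖ ≤ t k ^ m * (C * (t k * ‖w k‖ ^ (m + 1))) := by
    refine hk.trans_eq ?_
    ring
  linarith [le_of_mul_le_mul_left this (pow_pos (ht k) m)]

theorem Set.infinite_range_of_tendsto_of_ne {X : Type*} [TopologicalSpace X] [T1Space X]
    {u : ℕ → X} {x : X} (hu : Tendsto u atTop (𝓝 x)) (hne : ∀ k, u k ≠ x) :
    (Set.range u).Infinite := fun hfin => by
  have hx : (Set.range u)ᶜ ∈ 𝓝 x :=
    hfin.isClosed.isOpen_compl.mem_nhds fun ⟨k, hk⟩ => hne k hk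
  obtain ⟨k, hk⟩ := (hu.eventually_mem hx).exists
  exact hk ⟨k, rfl⟩

namespace NondegenerateSequence

variable {n : ℕ}

noncomputable def direction (n k : ℕ) : Fin n → ℝ := fun j => exp ((k : ℝ) ^ (j + 1 : ℕ))

noncomputable def scale (n k : ℕ) : ℝ := exp (-(k : ℝ) ^ (n + 1))

theorem scale_pos (k : ℕ) : 0 < scale n k := exp_pos _

theorem norm_direction_le {k : ℕ} (hk : 1 ≤ k) : ‖direction n k‖ ≤ exp ((k : ℝ) ^ n) := by
  refine (pi_norm_le_iff_of_nonneg (exp_pos _).le).mpr fun j => ?_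
  rw [direction, Real.norm_of_nonneg (exp_pos _).le, exp_le_exp]
  exact pow_le_pow_right₀ (by exact_mod_cast hk) j.isLt

theorem tendsto_scale_mul_norm_direction_pow (M : ℕ) :
    Tendsto (fun k => scale n k * ‖direction n k‖ ^ M) atTop (𝓝 0) := by
  have hlim : Tendsto (fun k : ℕ => exp (M - k)) atTop (𝓝 0) :=
    tendsto_exp_atBot.comp <| tendsto_atBot_add_const_left _ _ <|
      tendsto_neg_atBot_iff.mpr tendsto_natCast_atTop_atTop
  refine tendsto_of_tendsto_of_tendsto_of_le_of_le' tendsto_const_nhds hlim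
    (Eventually.of_forall fun k => mul_nonneg (scale_pos k).le (by positivity)) ?_
  filter_upwards [eventually_ge_atTop (max M 1)] with k hk
  have hk1 : (1 : ℝ) ≤ k := by exact_mod_cast le_of_max_le_right hk
  have hkM : (M : ℝ) ≤ k := by exact_mod_cast le_of_max_le_left hk
  calc scale n k * ‖direction n k‖ ^ M ≤ exp (-(k : ℝ) ^ (n + 1)) * exp ((k : ℝ) ^ n) ^ M := by
        unfold scale
        gcongr
        exact norm_direction_le (by exact_mod_cast hk1)
    _ = exp ((k : ℝ) ^ n * (M - k)) := by rw [← exp_nat_mul, ← exp_add]; ring_nf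
    _ ≤ exp (M - k) := by
        rw [exp_le_exp]
        nlinarith [one_le_pow₀ (n := n) hk1]

theorem tendsto_scale_smul_direction :
    Tendsto (fun k => scale n k • direction n k) atTop (𝓝 0) := by
  rw [tendsto_zero_iff_norm_tendsto_zero]
  simpa [norm_smul, Real.norm_of_nonneg (scale_pos _).le] using
    tendsto_scale_mul_norm_direction_pow (n := n) 1

theorem prod_direction_pow (k : ℕ) (α : Fin n → ℕ) :
    ∏ j, direction n k j ^ α j = exp (k * ((∑ j, α j * k ^ (j : ℕ) : ℕ) : ℝ)) := by
  simp only [direction, ← exp_nat_mul, ← exp_sum]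
  push_cast
  rw [mul_sum]
  exact congrArg exp (sum_congr rfl fun j _ => by ring)

theorem exists_pos_eventually_le_norm_apply_diag_direction {m : ℕ}
    (Q : ContinuousMultilinearMap ℝ (fun _ : Fin m => Fin n → ℝ) ℝ) (hQ : ∃ y, Q (fun _ => y) ≠ 0) :
    ∃ ε > 0, ∀ᶠ k in atTop, ε ≤ ‖Q fun _ => direction n k‖ := by
  obtain ⟨A, a, hA, hQA⟩ := Q.toMultilinearMap.exists_apply_diag_eq_sum_monomial
  have ha : ∃ α ∈ A, a α ≠ 0 := by
    by_contra! h
    obtain ⟨y, hy⟩ := hQ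
    exact hy <| (hQA y).trans <| sum_eq_zero fun α hα => by rw [h α hα, zero_mul]
  have hinj : ∀ᶠ k in atTop, Set.InjOn (fun α : Fin n → ℕ => ∑ j, α j * k ^ (j : ℕ)) A := by
    filter_upwards [eventually_gt_atTop (m + 1)] with k hk
    refine Set.InjOn.mono ?_ (Nat.injOn_sum_mul_pow (by omega))
    intro α hα j
    have := (single_le_sum (fun j _ => Nat.zero_le (α j)) (mem_univ j)).trans_eq (hA α hα)
    simp only [Fintype.card_fin] at this
    omega
  obtain ⟨ε, hε, h⟩ := exists_pos_eventually_le_abs_sum_mul_exp A a _ hinj ha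
  refine ⟨ε, hε, h.mono fun k hk => ?_⟩
  rw [Real.norm_eq_abs]
  convert hk using 2
  exact (hQA _).trans (sum_congr rfl fun α _ => by rw [prod_direction_pow, mul_comm])

end NondegenerateSequence

open NondegenerateSequence

/-- For `n ≥ 1` there is an infinite subset `Γ ⊆ ℝⁿ` meeting the zero set of every
real-analytic function `F : ℝⁿ → ℝ` that is not identically zero in only finitely many
points. -/
theorem exists_infinite_nondegenerate_set_real {n : ℕ} (hn : 1 ≤ n) :
    ∃ Γ : Set (Fin n → ℝ), Γ.Infinite ∧
      ∀ F : (Fin n → ℝ) → ℝ, AnalyticOn ℝ F Set.univ → (∃ x, F x ≠ 0) →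
        {γ ∈ Γ | F γ = 0}.Finite := by
  have hne (k : ℕ) : scale n k • direction n k ≠ 0 := fun h => by
    simpa [direction, (exp_pos _).ne', (scale_pos k).ne'] using congrFun h ⟨0, hn⟩
  refine ⟨Set.range fun k => scale n k • direction n k,
    Set.infinite_range_of_tendsto_of_ne tendsto_scale_smul_direction hne, fun F hF hF0 => ?_⟩
  have hFa : AnalyticOnNhd ℝ F Set.univ := analyticOn_univ.mp hF
  have hgerm : ¬F =ᶠ[𝓝 0] 0 := fun h => by
    obtain ⟨x, hx⟩ := hF0
    exact hx (hFa.eqOn_zero_of_preconnected_of_eventuallyEq_zero isPreconnected_univ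
      (Set.mem_univ 0) h (Set.mem_univ x))
  obtain ⟨p, hp⟩ := hFa 0 (Set.mem_univ 0)
  obtain ⟨m, hQ, hO⟩ := hp.exists_apply_diag_ne_zero_isBigO hgerm
  obtain ⟨ε, hε, hlow⟩ := exists_pos_eventually_le_norm_apply_diag_direction (p m) hQ
  obtain ⟨N, hN⟩ := eventually_atTop.mp <| eventually_ne_zero_of_isBigO_sub_apply_diag hO
    scale_pos tendsto_scale_smul_direction (tendsto_scale_mul_norm_direction_pow _) hε hlow
  refine ((Set.finite_Iio N).image fun k => scale n k • direction n k).subset ?_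
  rintro _ ⟨⟨k, rfl⟩, hk⟩
  exact ⟨k, not_le.mp fun hNk => hN k hNk hk, rfl⟩
end

section
/- Let k be an infinite field and n ≥ 1. Then there exists an infinite subset Γ ⊆ kⁿ such that for every nonzero polynomial P ∈ k[X₁, …, Xₙ] the set {x ∈ Γ : P(x) = 0} is finite. -/
/-!
Over a countable field there are only countably many nonzero polynomials `P₀, P₁, …`, and a
nonzero polynomial does not vanish at infinitely many points, so one can choose distinct points
`x₀, x₁, …` with `Pⱼ(xₘ) ≠ 0` for all `j < m`; each `Pⱼ` then vanishes at no more than `j` of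
them. An arbitrary infinite field `k` contains a countable infinite subfield `F`, and a point set
that works for `F`-polynomials also works for `k`-polynomials: if `φ : k → F` is an `F`-linear
functional not killing some coefficient of `P`, then applying `φ` to the coefficients of `P`
gives a nonzero `Q ∈ F[X]` with `Q(x) = φ(P(x))` for `x ∈ Fⁿ`.
-/

open Set

theorem Set.exists_infinite_forall_diff_finite {X : Type*} {A : ℕ → Set X} (hA : Antitone A)
    (hinf : ∀ m, (A m).Infinite) : ∃ Γ : Set X, Γ.Infinite ∧ ∀ m, (Γ \ A m).Finite := by
  classical
  obtain ⟨f, hfA, hf⟩ := exists_seq_of_forall_finset_exists (fun a : ℕ × X ↦ a.2 ∈ A a.1)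
    (fun a b ↦ a.1 < b.1 ∧ a.2 ≠ b.2) fun s _ ↦ by
      obtain ⟨x, hxA, hxs⟩ := (hinf (s.sup Prod.fst + 1)).exists_notMem_finset (s.image Prod.snd)
      refine ⟨(s.sup Prod.fst + 1, x), hxA, fun a ha ↦ ⟨Nat.lt_succ_of_le (s.le_sup ha), ?_⟩⟩
      rintro rfl
      exact hxs (Finset.mem_image_of_mem _ ha)
  have hmono : StrictMono (fun i ↦ (f i).1) := fun i j hij ↦ (hf i j hij).1
  have hinj : Function.Injective (fun i ↦ (f i).2) :=
    Function.injective_iff_pairwise_ne.mpr fun i j hij ↦ by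
      rcases hij.lt_or_gt with h | h
      exacts [(hf i j h).2, ((hf j i h).2).symm]
  refine ⟨range fun i ↦ (f i).2, infinite_range_of_injective hinj, fun m ↦ ?_⟩
  refine ((finite_Iio m).image fun i ↦ (f i).2).subset ?_
  rintro _ ⟨⟨i, rfl⟩, hi⟩
  refine ⟨i, mem_Iio.mpr <| not_le.mp fun hmi ↦ hi (hA ?_ (hfA i)), rfl⟩
  exact hmi.trans (hmono.id_le i)

theorem Subfield.exists_countable_infinite (k : Type*) [Field k] [Infinite k] :
    ∃ F : Subfield k, Countable F ∧ Infinite F := by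
  let ι := Infinite.natEmbedding k
  refine ⟨closure (range ι), ?_, ?_⟩
  · rw [← Cardinal.mk_le_aleph0_iff]
    refine (cardinalMk_closure_le_max _).trans (max_le ?_ le_rfl)
    exact Cardinal.mk_le_aleph0_iff.mpr (countable_range ι).to_subtype
  · exact Infinite.of_injective (fun m ↦ ⟨ι m, subset_closure ⟨m, rfl⟩⟩)
      fun _ _ h ↦ ι.injective (congrArg Subtype.val h)

namespace MvPolynomial

variable {σ : Type*}

instance {R : Type*} [CommSemiring R] [Countable σ] [Countable R] :
    Countable (MvPolynomial σ R) :=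
  (AddMonoidAlgebra.coeffEquiv : MvPolynomial σ R ≃ _).injective.countable

def IsNondegenerate {R : Type*} [CommSemiring R] (Γ : Set (σ → R)) : Prop :=
  ∀ P : MvPolynomial σ R, P ≠ 0 → {x ∈ Γ | eval x P = 0}.Finite

section Domain

variable {R : Type*} [CommRing R] [IsDomain R] [Infinite R]

theorem infinite_setOf_eval_ne_zero [Nonempty σ] {p : MvPolynomial σ R} (hp : p ≠ 0) :
    {x : σ → R | eval x p ≠ 0}.Infinite := by
  intro hfin
  obtain ⟨i⟩ := ‹Nonempty σ›
  -- `p` would vanish on a box with infinite sides avoiding all coordinates of its non-roots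
  refine hp (funext_set (q := 0) (fun j ↦ ((· j) '' {x | eval x p ≠ 0})ᶜ)
    (fun j ↦ (hfin.image _).infinite_compl) fun x hx ↦ ?_)
  by_contra hpx
  exact hx i (mem_univ i) ⟨x, by simpa using hpx, rfl⟩

theorem exists_infinite_isNondegenerate_of_countable [Countable R] [Countable σ] [Nonempty σ] :
    ∃ Γ : Set (σ → R), Γ.Infinite ∧ IsNondegenerate Γ := by
  have : Nonempty {P : MvPolynomial σ R // P ≠ 0} := ⟨⟨1, one_ne_zero⟩⟩
  obtain ⟨P, hP⟩ := exists_surjective_nat {P : MvPolynomial σ R // P ≠ 0}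
  let A (m : ℕ) : Set (σ → R) := {x | ∀ j < m, eval x (P j).1 ≠ 0}
  have hA : Antitone A := fun m m' hmm' x hx j hj ↦ hx j (hj.trans_le hmm')
  have hinf (m : ℕ) : (A m).Infinite := by
    convert infinite_setOf_eval_ne_zero
      (Finset.prod_ne_zero_iff.mpr fun j (_ : j ∈ Finset.range m) ↦ (P j).2) using 1
    ext x
    simp [A, Finset.prod_ne_zero_iff]
  obtain ⟨Γ, hΓ, hΓA⟩ := exists_infinite_forall_diff_finite hA hinf
  refine ⟨Γ, hΓ, fun Q hQ ↦ ?_⟩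
  obtain ⟨j, hj⟩ := hP ⟨Q, hQ⟩
  refine (hΓA (j + 1)).subset fun x ⟨hxΓ, hQx⟩ ↦ ⟨hxΓ, fun hx ↦ hx j j.lt_succ_self ?_⟩
  rwa [hj]

end Domain

section Descent

variable {F k : Type*}

theorem exists_coeff_eq_and_eval_eq [CommRing F] [CommRing k] [Algebra F k] (φ : k →ₗ[F] F)
    (P : MvPolynomial σ k) :
    ∃ Q : MvPolynomial σ F, (∀ m, coeff m Q = φ (coeff m P)) ∧
      ∀ x : σ → F, eval x Q = φ (eval (algebraMap F k ∘ x) P) := by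
  induction P using induction_on' with
  | monomial m c =>
    refine ⟨monomial m (φ c), fun m' ↦ ?_, fun x ↦ ?_⟩
    · classical
      simp only [coeff_monomial, apply_ite φ, map_zero]
    · simp only [eval_monomial, Function.comp_apply, ← map_pow, ← map_finsuppProd]
      rw [mul_comm c, ← Algebra.smul_def, map_smul, smul_eq_mul, mul_comm]
  | add P₁ P₂ h₁ h₂ =>
    obtain ⟨Q₁, hc₁, he₁⟩ := h₁
    obtain ⟨Q₂, hc₂, he₂⟩ := h₂
    exact ⟨Q₁ + Q₂, fun m ↦ by simp [hc₁, hc₂], fun x ↦ by simp [he₁, he₂]⟩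

theorem IsNondegenerate.image_algebraMap [Field F] [CommRing k] [Nontrivial k] [Algebra F k]
    {Γ : Set (σ → F)} (hΓ : IsNondegenerate Γ) : IsNondegenerate ((algebraMap F k ∘ ·) '' Γ) := by
  intro P hP
  obtain ⟨d, hd⟩ := ne_zero_iff.mp hP
  obtain ⟨φ, hφ⟩ := Module.Projective.exists_dual_ne_zero F hd
  obtain ⟨Q, hQc, hQe⟩ := exists_coeff_eq_and_eval_eq φ P
  have hQ : Q ≠ 0 := fun h ↦ hφ (by rw [← hQc, h, coeff_zero])
  refine ((hΓ Q hQ).image (algebraMap F k ∘ ·)).subset ?_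
  rintro _ ⟨⟨y, hy, rfl⟩, hPy⟩
  exact ⟨y, ⟨hy, by rw [hQe, hPy, map_zero]⟩, rfl⟩

end Descent

theorem exists_infinite_isNondegenerate (k : Type*) [Field k] [Infinite k]
    [Countable σ] [Nonempty σ] : ∃ Γ : Set (σ → k), Γ.Infinite ∧ IsNondegenerate Γ := by
  obtain ⟨F, _, _⟩ := Subfield.exists_countable_infinite k
  obtain ⟨Γ, hΓ, hΓnd⟩ := exists_infinite_isNondegenerate_of_countable (R := F) (σ := σ)
  exact ⟨_, hΓ.image ((algebraMap F k).injective.comp_left).injOn, hΓnd.image_algebraMap⟩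

end MvPolynomial

/-- Let `k` be an infinite field and `n ≥ 1`. Then there is an infinite subset `Γ ⊆ kⁿ`
meeting the zero locus of every nonzero polynomial `P ∈ k[X₁,…,Xₙ]` in only finitely
many points. -/
theorem exists_infinite_nondegenerate_set_field (k : Type*) [Field k] [Infinite k]
    {n : ℕ} (hn : 1 ≤ n) :
    ∃ Γ : Set (Fin n → k), Γ.Infinite ∧
      ∀ P : MvPolynomial (Fin n) k, P ≠ 0 →
        {x ∈ Γ | MvPolynomial.eval x P = 0}.Finite := by
  have : Nonempty (Fin n) := ⟨⟨0, hn⟩⟩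
  exact MvPolynomial.exists_infinite_isNondegenerate k
end
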